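/- arXiv:2207.05250 — 4 statements merged into one kernel-verified Lean document; each statement's English description precedes it below -/
import Mathlib

section
/- Let (X, 𝒜, μ) and (M, ℬ, ν) be σ-finite measure spaces and let p : X × M → [0, ∞) be measurable with ∫∫ p d(μ ⊗ ν) = 1. Define the marginals p_X(x) = ∫ p(x, m) dν(m) and p_M(m) = ∫ p(x, m) dμ(x). Let L ≥ 1 be an integer and U : X × M → ℝ be measurable, and define the weight g_U(x, m₀, …, m_L) = exp(U(x, m₀)) / ((1/(L+1)) ∑_{ℓ=0}^{L} exp(U(x, m_ℓ))). Then the function p₂(x, m₀, …, m_L) = p_X(x) · (∏_{ℓ=0}^{L} p_M(m_ℓ)) · g_U(x, m₀, …, m_L) is a probability density with respect to μ ⊗ ν^{⊗(L+1)}, i.e. ∫_{X × M^{L+1}} p₂ d(μ ⊗ ν^{⊗(L+1)}) = 1. -/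
/-!
Write `Q(x, m) = p_X(x) ∏ ℓ p_M(m ℓ)`; it is a probability density for `μ ⊗ ν^{⊗(L+1)}` by
Fubini, and it is invariant under permutations of the coordinates of `m`. Since `g_U` is
`L + 1` times the softmax weight of coordinate `0`, it suffices that `∫ Q · softmax_j` does not
depend on `j`: permuting coordinates preserves the product measure and `Q` and moves `softmax_j`
to `softmax_k`. As the `L + 1` weights sum to `1`, each integral is `1 / (L + 1)`.
-/

open MeasureTheory

noncomputable def softmax {ι : Type*} [Fintype ι] (f : ι → ℝ) (j : ι) : ℝ :=
  Real.exp (f j) / ∑ l, Real.exp (f l)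

section Softmax

variable {ι : Type*} [Fintype ι]

lemma softmax_nonneg (f : ι → ℝ) (j : ι) : 0 ≤ softmax f j := by
  unfold softmax; positivity

lemma softmax_le_one (f : ι → ℝ) (j : ι) : softmax f j ≤ 1 :=
  div_le_one_of_le₀ (Finset.single_le_sum (fun l _ => (Real.exp_pos (f l)).le)
    (Finset.mem_univ j)) (by positivity)

lemma sum_softmax [Nonempty ι] (f : ι → ℝ) : ∑ j, softmax f j = 1 := by
  simp only [softmax]
  rw [← Finset.sum_div, div_self]
  exact (Finset.sum_pos (fun l _ => Real.exp_pos (f l)) Finset.univ_nonempty).ne'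

lemma softmax_comp_perm (f : ι → ℝ) (e : Equiv.Perm ι) (j : ι) :
    softmax (f ∘ e) j = softmax f (e j) := by
  simp only [softmax, Function.comp_apply, Equiv.sum_comp e fun l => Real.exp (f l)]

lemma Measurable.softmax {α : Type*} [MeasurableSpace α] {f : α → ι → ℝ}
    (hf : ∀ l, Measurable fun a => f a l) (j : ι) : Measurable fun a => softmax (f a) j := by
  unfold _root_.softmax
  measurability

end Softmax

section Exchangeable

variable {X M ι : Type*} [MeasurableSpace X] [MeasurableSpace M] [Fintype ι]
  {μ : Measure X} {ν : Measure M} [SigmaFinite μ] [SigmaFinite ν]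

theorem integral_prod_pi_comp_perm {E : Type*} [NormedAddCommGroup E] [NormedSpace ℝ E]
    (F : X × (ι → M) → E) (e : Equiv.Perm ι) :
    ∫ z, F (z.1, z.2 ∘ e) ∂(μ.prod (Measure.pi fun _ => ν)) =
      ∫ z, F z ∂(μ.prod (Measure.pi fun _ => ν)) := by
  let ψ := (MeasurableEquiv.refl X).prodCongr
    (MeasurableEquiv.arrowCongr' e.symm (MeasurableEquiv.refl M))
  have hψ : MeasurePreserving ψ (μ.prod (Measure.pi fun _ => ν))
      (μ.prod (Measure.pi fun _ => ν)) :=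
    (MeasurePreserving.id μ).prod
      (measurePreserving_arrowCongr' _ _ _ _ fun _ => MeasurePreserving.id ν)
  exact hψ.integral_comp' F

theorem integral_mul_softmax_eq_div_card (Q : X × (ι → M) → ℝ)
    (hQ : Integrable Q (μ.prod (Measure.pi fun _ => ν)))
    (hQ_perm : ∀ x m (e : Equiv.Perm ι), Q (x, m ∘ e) = Q (x, m))
    (U : X × M → ℝ) (hU : Measurable U) (j : ι) :
    ∫ z, Q z * softmax (fun l => U (z.1, z.2 l)) j ∂(μ.prod (Measure.pi fun _ => ν)) =
      (∫ z, Q z ∂(μ.prod (Measure.pi fun _ => ν))) / Fintype.card ι := by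
  classical
  have : Nonempty ι := ⟨j⟩
  set w : X × (ι → M) → ι → ℝ := fun z => softmax fun l => U (z.1, z.2 l)
  have hw_int : ∀ k, Integrable (fun z => Q z * w z k) (μ.prod (Measure.pi fun _ => ν)) :=
    fun k => hQ.mul_bdd (Measurable.softmax (fun l => by fun_prop) k).aestronglyMeasurable
      (.of_forall fun z => by
        rw [Real.norm_of_nonneg (softmax_nonneg _ _)]; exact softmax_le_one _ _)
  have h_exch : ∀ k, ∫ z, Q z * w z k ∂(μ.prod (Measure.pi fun _ => ν)) =
      ∫ z, Q z * w z j ∂(μ.prod (Measure.pi fun _ => ν)) := fun k => by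
    rw [← integral_prod_pi_comp_perm _ (Equiv.swap j k)]
    congr 1 with ⟨x, m⟩
    simp only [w, hQ_perm]
    have := softmax_comp_perm (fun l => U (x, m l)) (Equiv.swap j k) k
    rw [Equiv.swap_apply_right] at this
    exact congrArg _ this
  have h_total : ∫ z, Q z ∂(μ.prod (Measure.pi fun _ => ν)) =
      ∑ k, ∫ z, Q z * w z k ∂(μ.prod (Measure.pi fun _ => ν)) := by
    rw [← integral_finsetSum _ fun k _ => hw_int k]
    simp only [← Finset.mul_sum, w, sum_softmax, mul_one]
  rw [h_total, Finset.sum_congr rfl fun k _ => h_exch k, Finset.sum_const, Finset.card_univ,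
    nsmul_eq_mul, mul_div_cancel_left₀ _ (Nat.cast_ne_zero.2 Fintype.card_ne_zero)]

end Exchangeable

section Marginals

variable {X M ι : Type*} [MeasurableSpace X] [MeasurableSpace M] [Fintype ι]
  {μ : Measure X} {ν : Measure M} [SigmaFinite μ] [SigmaFinite ν]
  {p : X × M → ℝ} {pX : X → ℝ} {pM : M → ℝ}

theorem integrable_marginal_mul_prod_marginal (hp : Integrable p (μ.prod ν))
    (hpX : ∀ x, pX x = ∫ a, p (x, a) ∂ν) (hpM : ∀ a, pM a = ∫ x, p (x, a) ∂μ) :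
    Integrable (fun z : X × (ι → M) => pX z.1 * ∏ l, pM (z.2 l))
      (μ.prod (Measure.pi fun _ => ν)) := by
  rw [funext hpX, funext hpM]
  exact hp.integral_prod_left.mul_prod (Integrable.fintype_prod fun _ => hp.integral_prod_right)

theorem integral_marginal_mul_prod_marginal (hp : ∫ z, p z ∂(μ.prod ν) = 1)
    (hpX : ∀ x, pX x = ∫ a, p (x, a) ∂ν) (hpM : ∀ a, pM a = ∫ x, p (x, a) ∂μ) :
    ∫ z : X × (ι → M), pX z.1 * ∏ l, pM (z.2 l) ∂(μ.prod (Measure.pi fun _ => ν)) = 1 := by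
  have hp_int : Integrable p (μ.prod ν) := .of_integral_ne_zero (by simp [hp])
  rw [integral_prod_mul pX fun m : ι → M => ∏ l, pM (m l), integral_fintype_prod_eq_pow,
    funext hpX, funext hpM, ← integral_prod _ hp_int, ← integral_prod_symm _ hp_int, hp,
    one_pow, one_mul]

end Marginals

theorem stmt1_general {X M : Type*} [MeasurableSpace X] [MeasurableSpace M]
    (μ : Measure X) (ν : Measure M) [SigmaFinite μ] [SigmaFinite ν]
    (p : X × M → ℝ)
    (hp1 : ∫ z, p z ∂(μ.prod ν) = 1)
    (pX : X → ℝ) (hpX : ∀ x, pX x = ∫ a, p (x, a) ∂ν)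
    (pM : M → ℝ) (hpM : ∀ a, pM a = ∫ x, p (x, a) ∂μ)
    (L : ℕ)
    (U : X × M → ℝ) (hU : Measurable U)
    (g : X → (Fin (L + 1) → M) → ℝ)
    (hg : ∀ x ms, g x ms =
      Real.exp (U (x, ms 0)) / ((1 / ((L : ℝ) + 1)) * ∑ ℓ, Real.exp (U (x, ms ℓ))))
    (p₂ : X × (Fin (L + 1) → M) → ℝ)
    (hp₂ : ∀ z, p₂ z = pX z.1 * (∏ ℓ, pM (z.2 ℓ)) * g z.1 z.2) :
    ∫ z : X × (Fin (L + 1) → M), p₂ z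
        ∂(μ.prod (Measure.pi fun _ : Fin (L + 1) => ν)) = 1 := by
  have hp_int : Integrable p (μ.prod ν) := .of_integral_ne_zero (by simp [hp1])
  have h_density : ∀ z, p₂ z = ((L : ℝ) + 1) *
      ((pX z.1 * ∏ ℓ, pM (z.2 ℓ)) * softmax (fun ℓ => U (z.1, z.2 ℓ)) 0) := fun z => by
    rw [hp₂, hg, softmax]
    field_simp
  simp_rw [h_density]
  rw [integral_const_mul, integral_mul_softmax_eq_div_card _
      (integrable_marginal_mul_prod_marginal hp_int hpX hpM) (fun x m e => ?_) U hU,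
    integral_marginal_mul_prod_marginal hp1 hpX hpM, Fintype.card_fin]
  · push_cast
    field_simp
  · simp only [Function.comp_apply, Equiv.prod_comp e fun ℓ => pM (m ℓ)]

/-- The reweighted product of marginals `p₂ = p_X(x) · (∏ ℓ, p_M(m ℓ)) · g_U(x, m)` is a
probability density with respect to `μ ⊗ ν^{⊗(L+1)}`. -/
theorem stmt1 {X M : Type*} [MeasurableSpace X] [MeasurableSpace M]
    (μ : Measure X) (ν : Measure M) [SigmaFinite μ] [SigmaFinite ν]
    (p : X × M → ℝ) (hp : Measurable p) (hp0 : ∀ z, 0 ≤ p z)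
    (hp1 : ∫ z, p z ∂(μ.prod ν) = 1)
    (pX : X → ℝ) (hpX : ∀ x, pX x = ∫ a, p (x, a) ∂ν)
    (pM : M → ℝ) (hpM : ∀ a, pM a = ∫ x, p (x, a) ∂μ)
    (L : ℕ) (hL : 1 ≤ L)
    (U : X × M → ℝ) (hU : Measurable U)
    (g : X → (Fin (L + 1) → M) → ℝ)
    (hg : ∀ x ms, g x ms =
      Real.exp (U (x, ms 0)) / ((1 / ((L : ℝ) + 1)) * ∑ ℓ, Real.exp (U (x, ms ℓ))))
    (p₂ : X × (Fin (L + 1) → M) → ℝ)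
    (hp₂ : ∀ z, p₂ z = pX z.1 * (∏ ℓ, pM (z.2 ℓ)) * g z.1 z.2) :
    ∫ z : X × (Fin (L + 1) → M), p₂ z
        ∂(μ.prod (Measure.pi fun _ : Fin (L + 1) => ν)) = 1 :=
  stmt1_general μ ν p hp1 pX hpX pM hpM L U hU g hg p₂ hp₂
end

section
/- Let (X, 𝒜, μ) and (M, ℬ, ν) be σ-finite measure spaces and let p : X × M → [0, ∞) be measurable with ∫∫ p d(μ ⊗ ν) = 1. Define the marginals p_X(x) = ∫ p(x, m) dν(m) and p_M(m) = ∫ p(x, m) dμ(x), and the mutual information I(p) = ∫∫ p(x, m) log( p(x, m) / (p_X(x) p_M(m)) ) d(μ ⊗ ν), with the convention 0·log 0 = 0. Assume p(x, m) > 0 for (μ ⊗ ν)-a.e. (x, m), that p_X and p_M are finite a.e., and that the integrand of I(p) is integrable. Let L ≥ 1 be an integer and U : X × M → ℝ measurable, define g_U(x, m₀, …, m_L) = exp(U(x, m₀)) / ((1/(L+1)) ∑_{ℓ=0}^{L} exp(U(x, m_ℓ))) and ℒ(U, L) = ∫_{X × M^{L+1}} p(x, m₀) (∏_{ℓ=1}^{L}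 p_M(m_ℓ)) log g_U d(μ ⊗ ν^{⊗(L+1)}), and assume the integrand of ℒ(U, L) is integrable. Define p₁(x, m₀, …, m_L) = p(x, m₀) ∏_{ℓ=1}^{L} p_M(m_ℓ) and p₂(x, m₀, …, m_L) = p_X(x) (∏_{ℓ=0}^{L} p_M(m_ℓ)) g_U(x, m₀, …, m_L). Then I(p) − ℒ(U, L) = ∫_{X × M^{L+1}} p₁ · log(p₁ / p₂) d(μ ⊗ ν^{⊗(L+1)}). -/
/-!
Each of the `L` contrastive samples is distributed according to `p_M`, which has total mass one, so
integrating them out turns `I(p)` into the integral over the big space of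
`p(x, m₀) log (p(x, m₀) / (p_X(x) p_M(m₀))) ∏_{ℓ ≥ 1} p_M(m_ℓ)`. Wherever all densities are
positive, `p₁ / p₂ = (p / (p_X p_M)) / g_U`, so this integrand and `p₁ log (p₁ / p₂)` differ by
exactly `p₁ log g_U`. The marginals are positive almost everywhere because `p` is.
-/

open MeasureTheory

theorem Fin.prod_univ_erase_zero {M : Type*} [CommMonoid M] {n : ℕ} (f : Fin (n + 1) → M) :
    ∏ i ∈ Finset.univ.erase 0, f i = ∏ j : Fin n, f j.succ := by
  rw [Fin.univ_succ, Finset.erase_cons, Finset.prod_map]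
  rfl

section

variable {α β : Type*} [MeasurableSpace α] [MeasurableSpace β] {μ : Measure α} {ν : Measure β}

theorem integral_pos_of_ae_pos (hμ : μ ≠ 0) {f : α → ℝ} (hf : Integrable f μ)
    (hpos : ∀ᵐ x ∂μ, 0 < f x) : 0 < ∫ x, f x ∂μ := by
  rw [integral_pos_iff_support_of_nonneg_ae (hpos.mono fun _ h => h.le) hf]
  have hsupp : Function.support f =ᵐ[μ] Set.univ :=
    ae_eq_univ.mpr (ae_iff.mp (hpos.mono fun _ h => h.ne'))
  rw [measure_congr hsupp]
  exact Measure.measure_univ_pos.mpr hμ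

theorem ae_integral_prod_left_pos [SFinite μ] [SFinite ν] (hν : ν ≠ 0) {f : α × β → ℝ}
    (hf : Integrable f (μ.prod ν)) (hpos : ∀ᵐ z ∂μ.prod ν, 0 < f z) :
    ∀ᵐ x ∂μ, 0 < ∫ y, f (x, y) ∂ν := by
  filter_upwards [Measure.ae_ae_of_ae_prod hpos, hf.prod_right_ae] with x hx hfx
  exact integral_pos_of_ae_pos hν hfx hx

theorem ae_integral_prod_right_pos [SFinite μ] [SFinite ν] (hμ : μ ≠ 0) {f : α × β → ℝ}
    (hf : Integrable f (μ.prod ν)) (hpos : ∀ᵐ z ∂μ.prod ν, 0 < f z) :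
    ∀ᵐ y ∂ν, 0 < ∫ x, f (x, y) ∂μ :=
  ae_integral_prod_left_pos hμ hf.swap
    (Measure.measurePreserving_swap.quasiMeasurePreserving.ae hpos)

variable (α β) in
def MeasurableEquiv.prodPiFinSucc (n : ℕ) :
    α × (Fin (n + 1) → β) ≃ᵐ (α × β) × (Fin n → β) :=
  ((MeasurableEquiv.refl α).prodCongr (MeasurableEquiv.piFinSuccAbove (fun _ => β) 0)).trans
    MeasurableEquiv.prodAssoc.symm

theorem measurePreserving_prodPiFinSucc [SigmaFinite μ] [SigmaFinite ν] (n : ℕ) :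
    MeasurePreserving (MeasurableEquiv.prodPiFinSucc α β n) (μ.prod (Measure.pi fun _ => ν))
      ((μ.prod ν).prod (Measure.pi fun _ => ν)) :=
  (measurePreserving_prodAssoc μ ν _).symm.comp
    ((MeasurePreserving.id μ).prod (measurePreserving_piFinSuccAbove (fun _ => ν) 0))

theorem ae_pos_and_marginals_pos [SigmaFinite μ] [SigmaFinite ν] {f : α × β → ℝ}
    (hf : Integrable f (μ.prod ν)) (hpos : ∀ᵐ z ∂μ.prod ν, 0 < f z) (hμ : μ ≠ 0) (hν : ν ≠ 0)
    (n : ℕ) :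
    ∀ᵐ z ∂(μ.prod (Measure.pi fun _ : Fin (n + 1) => ν)), 0 < f (z.1, z.2 0) ∧
      0 < ∫ y, f (z.1, y) ∂ν ∧ ∀ i, 0 < ∫ x, f (x, z.2 i) ∂μ := by
  have hright_pi : ∀ᵐ ys ∂(Measure.pi fun _ : Fin (n + 1) => ν), ∀ i, 0 < ∫ x, f (x, ys i) ∂μ :=
    Filter.eventually_all.2 fun i =>
      (Measure.tendsto_eval_ae_ae (μ := fun _ => ν) (i := i)).eventually
        (ae_integral_prod_right_pos hμ hf hpos)
  filter_upwards [(Measure.quasiMeasurePreserving_fst.comp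
      (measurePreserving_prodPiFinSucc n).quasiMeasurePreserving).ae hpos,
    Measure.quasiMeasurePreserving_fst.ae (ae_integral_prod_left_pos hν hf hpos),
    Measure.quasiMeasurePreserving_snd.ae hright_pi] with z h₁ h₂ h₃ using ⟨h₁, h₂, h₃⟩

theorem integrable_head_mul_prod_tail [SigmaFinite μ] [SigmaFinite ν] {F : α × β → ℝ}
    {h : β → ℝ} (hF : Integrable F (μ.prod ν)) (hh : Integrable h ν) (n : ℕ) :
    Integrable (fun z : α × (Fin (n + 1) → β) => F (z.1, z.2 0) * ∏ j : Fin n, h (z.2 j.succ))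
      (μ.prod (Measure.pi fun _ => ν)) :=
  ((measurePreserving_prodPiFinSucc n).integrable_comp_emb (MeasurableEquiv.measurableEmbedding _)
    (g := fun w => F w.1 * ∏ j, h (w.2 j))).mpr
      (hF.mul_prod (Integrable.fintype_prod fun _ => hh))

theorem integral_head_mul_prod_tail [SigmaFinite μ] [SigmaFinite ν] (F : α × β → ℝ)
    (h : β → ℝ) (n : ℕ) :
    ∫ z : α × (Fin (n + 1) → β), F (z.1, z.2 0) * ∏ j : Fin n, h (z.2 j.succ)
        ∂(μ.prod (Measure.pi fun _ => ν)) = (∫ w, F w ∂(μ.prod ν)) * (∫ b, h b ∂ν) ^ n := by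
  calc _ = ∫ w, F w.1 * ∏ j, h (w.2 j) ∂((μ.prod ν).prod (Measure.pi fun _ => ν)) :=
        (measurePreserving_prodPiFinSucc n).integral_comp
          (MeasurableEquiv.measurableEmbedding _) _
    _ = _ := by
      rw [integral_prod_mul F (fun ms : Fin n → β => ∏ j, h (ms j)), integral_fintype_prod_eq_pow,
        Fintype.card_fin]

end

theorem mul_log_div_eq_sub {a b c P γ : ℝ} (ha : 0 < a) (hb : 0 < b) (hc : 0 < c) (hP : P ≠ 0)
    (hγ : 0 < γ) :
    a * P * Real.log (a * P / (b * (c * P) * γ)) =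
      a * Real.log (a / (b * c)) * P - a * P * Real.log γ := by
  have hsplit : a * P / (b * (c * P) * γ) = a / (b * c) / γ := by field_simp
  rw [hsplit, Real.log_div (by positivity) hγ.ne']
  ring

theorem stmt3_general {X M : Type*} [MeasurableSpace X] [MeasurableSpace M]
    (μ : Measure X) (ν : Measure M) [SigmaFinite μ] [SigmaFinite ν]
    (p : X × M → ℝ)
    (hp1 : ∫ z, p z ∂(μ.prod ν) = 1)
    (pX : X → ℝ) (hpX : ∀ x, pX x = ∫ a, p (x, a) ∂ν)
    (pM : M → ℝ) (hpM : ∀ a, pM a = ∫ x, p (x, a) ∂μ)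
    (hppos : ∀ᵐ z ∂(μ.prod ν), 0 < p z)
    (hIint : Integrable (fun z : X × M => p z * Real.log (p z / (pX z.1 * pM z.2))) (μ.prod ν))
    (L : ℕ)
    (U : X × M → ℝ)
    (g : X → (Fin (L + 1) → M) → ℝ)
    (hg : ∀ x ms, g x ms =
      Real.exp (U (x, ms 0)) / ((1 / ((L : ℝ) + 1)) * ∑ ℓ, Real.exp (U (x, ms ℓ))))
    (p₁ p₂ : X × (Fin (L + 1) → M) → ℝ)
    (hp₁ : ∀ z, p₁ z = p (z.1, z.2 0) * ∏ ℓ ∈ Finset.univ.erase (0 : Fin (L + 1)), pM (z.2 ℓ))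
    (hp₂ : ∀ z, p₂ z = pX z.1 * (∏ ℓ, pM (z.2 ℓ)) * g z.1 z.2)
    (hℒint : Integrable (fun z : X × (Fin (L + 1) → M) => p₁ z * Real.log (g z.1 z.2))
      (μ.prod (Measure.pi fun _ : Fin (L + 1) => ν))) :
    (∫ z, p z * Real.log (p z / (pX z.1 * pM z.2)) ∂(μ.prod ν)) -
        (∫ z : X × (Fin (L + 1) → M), p₁ z * Real.log (g z.1 z.2)
          ∂(μ.prod (Measure.pi fun _ : Fin (L + 1) => ν))) =
      ∫ z : X × (Fin (L + 1) → M), p₁ z * Real.log (p₁ z / p₂ z)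
          ∂(μ.prod (Measure.pi fun _ : Fin (L + 1) => ν)) := by
  have hp_int : Integrable p (μ.prod ν) := .of_integral_ne_zero (by simp [hp1])
  have hμ : μ ≠ 0 := by rintro rfl; simp at hp1
  have hν : ν ≠ 0 := by rintro rfl; simp at hp1
  have hpM_int : Integrable pM ν := by simpa only [← hpM] using hp_int.integral_prod_right
  have hpM_one : ∫ a, pM a ∂ν = 1 := by
    simp_rw [hpM]
    rw [← integral_prod_symm p hp_int, hp1]
  have hpos : ∀ᵐ z ∂(μ.prod (Measure.pi fun _ : Fin (L + 1) => ν)),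
      0 < p (z.1, z.2 0) ∧ 0 < pX z.1 ∧ ∀ ℓ, 0 < pM (z.2 ℓ) := by
    simpa only [hpX, hpM] using ae_pos_and_marginals_pos hp_int hppos hμ hν L
  have hpointwise : ∀ᵐ z ∂(μ.prod (Measure.pi fun _ : Fin (L + 1) => ν)),
      p₁ z * Real.log (p₁ z / p₂ z) =
        p (z.1, z.2 0) * Real.log (p (z.1, z.2 0) / (pX z.1 * pM (z.2 0))) *
          ∏ j : Fin L, pM (z.2 j.succ) - p₁ z * Real.log (g z.1 z.2) := by
    filter_upwards [hpos] with z ⟨hpz, hpXz, hpMz⟩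
    have hgz : 0 < g z.1 z.2 := by rw [hg]; positivity
    rw [hp₁, hp₂, Fin.prod_univ_succ, Fin.prod_univ_erase_zero]
    exact mul_log_div_eq_sub hpz hpXz (hpMz 0)
      (Finset.prod_pos fun j _ => hpMz j.succ).ne' hgz
  rw [integral_congr_ae hpointwise,
    integral_sub (integrable_head_mul_prod_tail hIint hpM_int L) hℒint,
    integral_head_mul_prod_tail (fun z => p z * Real.log (p z / (pX z.1 * pM z.2))) pM L,
    hpM_one, one_pow, mul_one]

/-- The gap between the mutual information `I(p)` and the InfoNCE objective `ℒ(U, L)`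
equals the KL divergence between `p₁` (joint of the positive pair with `L` contrastive
samples from the marginal) and the reweighted product of marginals `p₂`. -/
theorem stmt3 {X M : Type*} [MeasurableSpace X] [MeasurableSpace M]
    (μ : Measure X) (ν : Measure M) [SigmaFinite μ] [SigmaFinite ν]
    (p : X × M → ℝ) (hp : Measurable p) (hp0 : ∀ z, 0 ≤ p z)
    (hp1 : ∫ z, p z ∂(μ.prod ν) = 1)
    (pX : X → ℝ) (hpX : ∀ x, pX x = ∫ a, p (x, a) ∂ν)
    (pM : M → ℝ) (hpM : ∀ a, pM a = ∫ x, p (x, a) ∂μ)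
    (hppos : ∀ᵐ z ∂(μ.prod ν), 0 < p z)
    (hpXfin : ∀ᵐ x ∂μ, Integrable (fun a => p (x, a)) ν)
    (hpMfin : ∀ᵐ a ∂ν, Integrable (fun x => p (x, a)) μ)
    (hIint : Integrable (fun z : X × M => p z * Real.log (p z / (pX z.1 * pM z.2))) (μ.prod ν))
    (L : ℕ) (hL : 1 ≤ L)
    (U : X × M → ℝ) (hU : Measurable U)
    (g : X → (Fin (L + 1) → M) → ℝ)
    (hg : ∀ x ms, g x ms =
      Real.exp (U (x, ms 0)) / ((1 / ((L : ℝ) + 1)) * ∑ ℓ, Real.exp (U (x, ms ℓ))))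
    (p₁ p₂ : X × (Fin (L + 1) → M) → ℝ)
    (hp₁ : ∀ z, p₁ z = p (z.1, z.2 0) * ∏ ℓ ∈ Finset.univ.erase (0 : Fin (L + 1)), pM (z.2 ℓ))
    (hp₂ : ∀ z, p₂ z = pX z.1 * (∏ ℓ, pM (z.2 ℓ)) * g z.1 z.2)
    (hℒint : Integrable (fun z : X × (Fin (L + 1) → M) => p₁ z * Real.log (g z.1 z.2))
      (μ.prod (Measure.pi fun _ : Fin (L + 1) => ν))) :
    (∫ z, p z * Real.log (p z / (pX z.1 * pM z.2)) ∂(μ.prod ν)) -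
        (∫ z : X × (Fin (L + 1) → M), p₁ z * Real.log (g z.1 z.2)
          ∂(μ.prod (Measure.pi fun _ : Fin (L + 1) => ν))) =
      ∫ z : X × (Fin (L + 1) → M), p₁ z * Real.log (p₁ z / p₂ z)
          ∂(μ.prod (Measure.pi fun _ : Fin (L + 1) => ν)) :=
  stmt3_general μ ν p hp1 pX hpX pM hpM hppos hIint L U g hg p₁ p₂ hp₁ hp₂ hℒint
end

section
/- Let (X, 𝒜, μ) and (M, ℬ, ν) be σ-finite measure spaces and let p : X × M → [0, ∞) be measurable with ∫∫ p d(μ ⊗ ν) = 1. Define the marginals p_X(x) = ∫ p(x, m) dν(m) and p_M(m) = ∫ p(x, m) dμ(x), assume p, p_X, p_M are positive and finite a.e., and define the density ratio k(x, m) = p(x, m) / (p_X(x) p_M(m)). Assume there exist constants 0 < c₁ ≤ c₂ < ∞ with c₁ ≤ k(x, m) ≤ c₂ for (μ ⊗ ν)-a.e. (x, m). For each integer L ≥ 1 define ℒ*(L) = ∫_{X × M^{L+1}} p(x, m₀) (∏_{ℓ=1}^{L} p_M(m_ℓ)) · log( k(x, m₀) / ((1/(L+1)) ∑_{ℓ=0}^{L}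 k(x, m_ℓ)) ) d(μ ⊗ ν^{⊗(L+1)}). Then the sequence L ↦ ℒ*(L) is nondecreasing: ℒ*(L) ≤ ℒ*(L+1) for all L ≥ 1. -/
/-!
Write `P = p_X μ` and `Q = p_M ν`. Since `p = k p_X p_M`, the objective `ℒ*(L)` is an expectation
under `P ⊗ Q^(L+1)`, in which all `L + 1` samples are i.i.d. and the positive sample `m₀` enters
only through the weight `k(x, m₀)`. With `A` the mean of the `k(x, m_ℓ)`, splitting
`log (k₀ / A) = log k₀ - log A` and using exchangeability of the samples gives
`ℒ*(L) = E[k log k] - E[A log A]`. The first term does not depend on `L`. For the second, the mean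
of `L + 2` values is the mean of its `L + 2` leave-one-out means, each distributed as the mean of
`L + 1` samples, so Jensen's inequality for `t ↦ t log t` shows that `E[A log A]` is nonincreasing.
The bounds `c₁ ≤ k ≤ c₂` make every integrand bounded, hence integrable.
-/

open MeasureTheory Finset Real
open scoped ENNReal NNReal

namespace MeasureTheory

lemma MeasurePreserving.integral_comp_of_aestronglyMeasurable
    {γ δ : Type*} [MeasurableSpace γ] [MeasurableSpace δ] {μ : Measure γ} {ν : Measure δ}
    {f : γ → δ} (hf : MeasurePreserving f μ ν) {F : δ → ℝ} (hF : AEStronglyMeasurable F ν) :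
    ∫ x, F (f x) ∂μ = ∫ y, F y ∂ν := by
  rw [← hf.map_eq] at hF ⊢
  exact (integral_map hf.aemeasurable hF).symm

lemma lintegral_fin_nat_prod_eq_prod {E : Type*} [MeasurableSpace E] {n : ℕ} {μ : Fin n → Measure E}
    [∀ i, SigmaFinite (μ i)] {f : Fin n → E → ℝ≥0∞} (hf : ∀ i, Measurable (f i)) :
    ∫⁻ x, ∏ i, f i (x i) ∂Measure.pi μ = ∏ i, ∫⁻ y, f i y ∂μ i := by
  induction n with
  | zero => simp
  | succ n ih =>
    rw [← (measurePreserving_piFinSuccAbove μ 0).symm.lintegral_comp_emb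
      (MeasurableEquiv.measurableEmbedding _)]
    simp_rw [MeasurableEquiv.piFinSuccAbove_symm_apply, Fin.insertNthEquiv,
      Fin.prod_univ_succ, Fin.insertNth_zero, Equiv.coe_fn_mk, Fin.cons_succ,
      Fin.zero_succAbove, cast_eq, Fin.cons_zero]
    have hprod : Measurable fun x : Fin n → E => ∏ i, f i.succ (x i) :=
      Finset.measurable_prod _ fun i _ => (hf i.succ).comp (measurable_pi_apply i)
    rw [lintegral_prod_mul (hf 0).aemeasurable hprod.aemeasurable, ih fun i => hf i.succ]

lemma Measure.pi_withDensity {E : Type*} [MeasurableSpace E] {n : ℕ} (ν : Measure E)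
    [SigmaFinite ν] {f : E → ℝ≥0∞} (hf : Measurable f) [SigmaFinite (ν.withDensity f)] :
    Measure.pi (fun _ : Fin n => ν.withDensity f) =
      (Measure.pi fun _ => ν).withDensity fun x => ∏ i, f (x i) := by
  refine Measure.pi_eq fun s hs => ?_
  rw [withDensity_apply _ (MeasurableSet.univ_pi hs), Measure.restrict_pi_pi,
    lintegral_fin_nat_prod_eq_prod fun _ => hf]
  simp only [withDensity_apply _ (hs _)]

lemma isProbabilityMeasure_withDensity_ofReal {α : Type*} [MeasurableSpace α] {μ : Measure α}
    {f : α → ℝ} (hf : Integrable f μ) (hf0 : ∀ x, 0 ≤ f x) (hf1 : ∫ x, f x ∂μ = 1) :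
    IsProbabilityMeasure (μ.withDensity fun x => ENNReal.ofReal (f x)) :=
  ⟨by rw [withDensity_apply _ MeasurableSet.univ, Measure.restrict_univ,
    ← ofReal_integral_eq_lintegral_ofReal hf (ae_of_all _ hf0), hf1, ENNReal.ofReal_one]⟩

section Marginals

variable {α β : Type*} [MeasurableSpace α] [MeasurableSpace β] {μ : Measure α} {ν : Measure β}
  [SigmaFinite μ] [SigmaFinite ν] {p : α × β → ℝ}

lemma isProbabilityMeasure_withDensity_marginal_fst (hp0 : ∀ z, 0 ≤ p z)
    (hp1 : ∫ z, p z ∂μ.prod ν = 1) :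
    IsProbabilityMeasure (μ.withDensity fun x => ENNReal.ofReal (∫ y, p (x, y) ∂ν)) :=
  have hp : Integrable p (μ.prod ν) := .of_integral_ne_zero (by simp [hp1])
  isProbabilityMeasure_withDensity_ofReal hp.integral_prod_left
    (fun _ => integral_nonneg fun _ => hp0 _) (by rwa [← integral_prod _ hp])

lemma isProbabilityMeasure_withDensity_marginal_snd (hp0 : ∀ z, 0 ≤ p z)
    (hp1 : ∫ z, p z ∂μ.prod ν = 1) :
    IsProbabilityMeasure (ν.withDensity fun y => ENNReal.ofReal (∫ x, p (x, y) ∂μ)) :=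
  have hp : Integrable p (μ.prod ν) := .of_integral_ne_zero (by simp [hp1])
  isProbabilityMeasure_withDensity_ofReal hp.integral_prod_right
    (fun _ => integral_nonneg fun _ => hp0 _) (by rwa [← integral_prod_symm _ hp])

end Marginals

end MeasureTheory

namespace InfoNCE

noncomputable def avg {n : ℕ} (t : Fin n → ℝ) : ℝ := (∑ i, t i) / n

lemma avg_mem_Icc {n : ℕ} [NeZero n] {t : Fin n → ℝ} {a b : ℝ} (ht : ∀ i, t i ∈ Set.Icc a b) :
    avg t ∈ Set.Icc a b := by
  have hn : (0 : ℝ) < n := by exact_mod_cast Nat.pos_of_neZero n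
  constructor
  · rw [avg, le_div_iff₀ hn]
    simpa [mul_comm] using card_nsmul_le_sum univ t a fun i _ => (ht i).1
  · rw [avg, div_le_iff₀ hn]
    simpa [mul_comm] using sum_le_card_nsmul univ t b fun i _ => (ht i).2

lemma avg_const {n : ℕ} [NeZero n] (c : ℝ) : avg (fun _ : Fin n => c) = c := by
  have hn : (n : ℝ) ≠ 0 := by exact_mod_cast NeZero.ne n
  simp [avg, hn]

lemma avg_mul_const {n : ℕ} (t : Fin n → ℝ) (c : ℝ) : avg (fun i => t i * c) = avg t * c := by
  simp only [avg, ← sum_mul, div_mul_eq_mul_div]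

lemma avg_avg_removeNth {n : ℕ} (t : Fin (n + 2) → ℝ) :
    avg (fun j => avg (j.removeNth t)) = avg t := by
  have hsum : ∀ j, ∑ i, j.removeNth t i = ∑ i, t i - t j := fun j => by
    rw [Fin.sum_univ_succAbove t j]; simp [Fin.removeNth]
  simp only [avg, ← sum_div, hsum, sum_sub_distrib, sum_const, card_univ, Fintype.card_fin,
    nsmul_eq_mul]
  push_cast
  field_simp
  ring

lemma mul_log_avg_le {n : ℕ} [NeZero n] {t : Fin n → ℝ} (ht : ∀ i, 0 ≤ t i) :
    avg t * log (avg t) ≤ avg fun i => t i * log (t i) := by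
  have hn : (n : ℝ) ≠ 0 := by exact_mod_cast NeZero.ne n
  have h := convexOn_mul_log.map_sum_le (t := univ) (w := fun _ => (n : ℝ)⁻¹) (p := t)
    (fun _ _ => by positivity) (by simp [hn]) (fun i _ => ht i)
  simp only [smul_eq_mul] at h
  rw [← mul_sum, ← mul_sum] at h
  simpa only [avg, inv_mul_eq_div] using h

lemma abs_mul_log_le {a b s t : ℝ} (ha : 0 < a) (hs : s ∈ Set.Icc a b) (ht : t ∈ Set.Icc a b) :
    |s * log t| ≤ b * max |log a| |log b| := by
  rw [abs_mul, abs_of_pos (ha.trans_le hs.1)]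
  exact mul_le_mul hs.2 (abs_le_max_abs_abs (log_le_log ha ht.1)
    (log_le_log (ha.trans_le ht.1) ht.2)) (abs_nonneg _) (ha.le.trans (hs.1.trans hs.2))

lemma integral_avg {γ : Type*} [MeasurableSpace γ] {μ : Measure γ} {n : ℕ} {F : Fin n → γ → ℝ}
    (hF : ∀ i, Integrable (F i) μ) : ∫ x, avg (fun i => F i x) ∂μ = avg fun i => ∫ x, F i x ∂μ := by
  simp only [avg, integral_div, integral_finsetSum _ fun i _ => hF i]

lemma integrable_mul_log_of_mem_Icc {γ : Type*} [MeasurableSpace γ] {μ : Measure γ}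
    [IsFiniteMeasure μ] {u v : γ → ℝ} {a b : ℝ} (ha : 0 < a) (hu : AEStronglyMeasurable u μ)
    (hv : AEStronglyMeasurable v μ) (hub : ∀ᵐ x ∂μ, u x ∈ Set.Icc a b)
    (hvb : ∀ᵐ x ∂μ, v x ∈ Set.Icc a b) : Integrable (fun x => u x * log (v x)) μ :=
  .of_bound (hu.mul (measurable_log.comp_aemeasurable hv.aemeasurable).aestronglyMeasurable) _
    (by filter_upwards [hub, hvb] with x hux hvx using abs_mul_log_le ha hux hvx)

variable {α β : Type*}

noncomputable def sampleAvg (g : α × β → ℝ) {n : ℕ} (z : α × (Fin n → β)) : ℝ :=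
  avg fun ℓ => g (z.1, z.2 ℓ)

lemma sampleAvg_comp_perm (g : α × β → ℝ) {n : ℕ} (σ : Equiv.Perm (Fin n))
    (z : α × (Fin n → β)) : sampleAvg g (z.1, z.2 ∘ σ) = sampleAvg g z := by
  simp only [sampleAvg, avg, Function.comp_apply, Equiv.sum_comp σ (fun ℓ => g (z.1, z.2 ℓ))]

lemma sampleAvg_mem_Icc {g : α × β → ℝ} {a b : ℝ} {n : ℕ} [NeZero n] {z : α × (Fin n → β)}
    (hz : ∀ ℓ, g (z.1, z.2 ℓ) ∈ Set.Icc a b) : sampleAvg g z ∈ Set.Icc a b :=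
  avg_mem_Icc hz

variable [MeasurableSpace α] [MeasurableSpace β]

noncomputable abbrev sampleLaw (P : Measure α) (Q : Measure β) (n : ℕ) :
    Measure (α × (Fin n → β)) :=
  P.prod (Measure.pi fun _ => Q)

noncomputable def infoNCE (P : Measure α) (Q : Measure β) (g : α × β → ℝ) (n : ℕ) : ℝ :=
  ∫ z : α × (Fin (n + 1) → β), g (z.1, z.2 0) * log (g (z.1, z.2 0) / sampleAvg g z)
    ∂sampleLaw P Q (n + 1)

lemma measurable_sampleAvg {g : α × β → ℝ} (hg : Measurable g) (n : ℕ) :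
    Measurable (sampleAvg g : α × (Fin n → β) → ℝ) := by
  unfold sampleAvg avg
  fun_prop

lemma measurable_sample_coord {g : α × β → ℝ} (hg : Measurable g) {n : ℕ} (ℓ : Fin n) :
    Measurable fun z : α × (Fin n → β) => g (z.1, z.2 ℓ) := by
  fun_prop

section MeasurePreserving

variable (P : Measure α) (Q : Measure β)

lemma measurePreserving_sample_comp_perm [SigmaFinite P] [SigmaFinite Q] {n : ℕ}
    (σ : Equiv.Perm (Fin n)) :
    MeasurePreserving (fun z : α × (Fin n → β) => (z.1, z.2 ∘ σ))
      (sampleLaw P Q n) (sampleLaw P Q n) := by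
  convert (MeasurePreserving.id P).prod (measurePreserving_piCongrLeft (fun _ => Q) σ.symm)
    using 1
  ext z i
  · rfl
  · simp [MeasurableEquiv.coe_piCongrLeft, Equiv.piCongrLeft_apply_eq_cast]

lemma measurePreserving_sample_eval [SFinite P] [IsProbabilityMeasure Q] {n : ℕ} (ℓ : Fin n) :
    MeasurePreserving (fun z : α × (Fin n → β) => (z.1, z.2 ℓ)) (sampleLaw P Q n) (P.prod Q) :=
  (MeasurePreserving.id P).prod (measurePreserving_eval _ ℓ)

lemma measurePreserving_sample_removeNth [SFinite P] [IsProbabilityMeasure Q] {n : ℕ}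
    (j : Fin (n + 1)) :
    MeasurePreserving (fun z : α × (Fin (n + 1) → β) => (z.1, j.removeNth z.2))
      (sampleLaw P Q (n + 1)) (sampleLaw P Q n) :=
  (MeasurePreserving.id P).prod (measurePreserving_snd.comp (measurePreserving_piFinSuccAbove _ j))

lemma ae_sample_mem_Icc [SFinite P] [IsProbabilityMeasure Q] {g : α × β → ℝ} {a b : ℝ}
    (hgb : ∀ᵐ z ∂P.prod Q, g z ∈ Set.Icc a b) (n : ℕ) :
    ∀ᵐ z ∂sampleLaw P Q n, ∀ ℓ, g (z.1, z.2 ℓ) ∈ Set.Icc a b :=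
  ae_all_iff.2 fun ℓ => (measurePreserving_sample_eval P Q ℓ).quasiMeasurePreserving.ae hgb

end MeasurePreserving

section Monotone

variable {P : Measure α} {Q : Measure β} [IsProbabilityMeasure P] [IsProbabilityMeasure Q]
  {g : α × β → ℝ} {a b : ℝ}

lemma integrable_coord_mul_log_sampleAvg (hg : Measurable g) (ha : 0 < a)
    (hgb : ∀ᵐ z ∂P.prod Q, g z ∈ Set.Icc a b) {n : ℕ} [NeZero n] (j : Fin n) :
    Integrable (fun z => g (z.1, z.2 j) * log (sampleAvg g z)) (sampleLaw P Q n) :=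
  have hbd := ae_sample_mem_Icc P Q hgb n
  integrable_mul_log_of_mem_Icc ha (measurable_sample_coord hg j).aestronglyMeasurable
    (measurable_sampleAvg hg n).aestronglyMeasurable (hbd.mono fun _ hz => hz j)
    (hbd.mono fun _ hz => sampleAvg_mem_Icc hz)

lemma integrable_sampleAvg_mul_log (hg : Measurable g) (ha : 0 < a)
    (hgb : ∀ᵐ z ∂P.prod Q, g z ∈ Set.Icc a b) (n : ℕ) [NeZero n] :
    Integrable (fun z => sampleAvg g z * log (sampleAvg g z)) (sampleLaw P Q n) :=
  have hbd := (ae_sample_mem_Icc P Q hgb n).mono fun _ hz => sampleAvg_mem_Icc hz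
  integrable_mul_log_of_mem_Icc ha (measurable_sampleAvg hg n).aestronglyMeasurable
    (measurable_sampleAvg hg n).aestronglyMeasurable hbd hbd

lemma integral_coord_mul_log_sampleAvg (hg : Measurable g) {n : ℕ} (i j : Fin n) :
    ∫ z, g (z.1, z.2 i) * log (sampleAvg g z) ∂sampleLaw P Q n =
      ∫ z, g (z.1, z.2 j) * log (sampleAvg g z) ∂sampleLaw P Q n := by
  have hF : Measurable fun z : α × (Fin n → β) => g (z.1, z.2 i) * log (sampleAvg g z) := by
    have := measurable_sampleAvg hg n
    fun_prop
  rw [← (measurePreserving_sample_comp_perm P Q (Equiv.swap i j))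
    |>.integral_comp_of_aestronglyMeasurable hF.aestronglyMeasurable]
  simp only [Function.comp_apply, Equiv.swap_apply_left, sampleAvg_comp_perm]

lemma integral_sampleAvg_mul_log (hg : Measurable g) (ha : 0 < a)
    (hgb : ∀ᵐ z ∂P.prod Q, g z ∈ Set.Icc a b) (n : ℕ) :
    ∫ z, sampleAvg g z * log (sampleAvg g z) ∂sampleLaw P Q (n + 1) =
      ∫ z, g (z.1, z.2 0) * log (sampleAvg g z) ∂sampleLaw P Q (n + 1) := by
  calc _ = ∫ z, avg (fun j => g (z.1, z.2 j) * log (sampleAvg g z)) ∂sampleLaw P Q (n + 1) := by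
        simp only [avg_mul_const]; rfl
    _ = _ := by
        rw [integral_avg (integrable_coord_mul_log_sampleAvg hg ha hgb)]
        simp only [integral_coord_mul_log_sampleAvg hg _ 0]
        exact avg_const _

lemma infoNCE_eq (hg : Measurable g) (ha : 0 < a) (hgb : ∀ᵐ z ∂P.prod Q, g z ∈ Set.Icc a b)
    (n : ℕ) :
    infoNCE P Q g n = ∫ z, g z * log (g z) ∂P.prod Q -
      ∫ z, sampleAvg g z * log (sampleAvg g z) ∂sampleLaw P Q (n + 1) := by
  have hbd := ae_sample_mem_Icc P Q hgb (n + 1)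
  have hφ : Measurable fun z => g z * log (g z) := by fun_prop
  have hg0 := hbd.mono fun _ hz => hz 0
  rw [integral_sampleAvg_mul_log hg ha hgb, ← (measurePreserving_sample_eval P Q (0 : Fin (n + 1)))
    |>.integral_comp_of_aestronglyMeasurable hφ.aestronglyMeasurable, ← integral_sub, infoNCE]
  · refine integral_congr_ae (hbd.mono fun z hz => ?_)
    dsimp only
    rw [log_div (ha.trans_le (hz 0).1).ne' (ha.trans_le (sampleAvg_mem_Icc hz).1).ne']
    ring
  · exact integrable_mul_log_of_mem_Icc ha (measurable_sample_coord hg 0).aestronglyMeasurable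
      (measurable_sample_coord hg 0).aestronglyMeasurable hg0 hg0
  · exact integrable_coord_mul_log_sampleAvg hg ha hgb 0

lemma integral_sampleAvg_mul_log_succ_le (hg : Measurable g) (ha : 0 < a)
    (hgb : ∀ᵐ z ∂P.prod Q, g z ∈ Set.Icc a b) (n : ℕ) :
    ∫ z, sampleAvg g z * log (sampleAvg g z) ∂sampleLaw P Q (n + 2) ≤
      ∫ z, sampleAvg g z * log (sampleAvg g z) ∂sampleLaw P Q (n + 1) := by
  set H : α × (Fin (n + 1) → β) → ℝ := fun z => sampleAvg g z * log (sampleAvg g z)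
  have hHm : Measurable H := by
    have := measurable_sampleAvg hg (n + 1)
    fun_prop
  have hint : ∀ j : Fin (n + 2), Integrable (fun z => H (z.1, j.removeNth z.2))
      (sampleLaw P Q (n + 2)) := fun j =>
    (measurePreserving_sample_removeNth P Q j).integrable_comp_of_integrable
      (integrable_sampleAvg_mul_log hg ha hgb (n + 1))
  have hjensen : ∀ᵐ z ∂sampleLaw P Q (n + 2),
      sampleAvg g z * log (sampleAvg g z) ≤ avg fun j => H (z.1, j.removeNth z.2) :=
    (ae_sample_mem_Icc P Q hgb (n + 2)).mono fun z hz => by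
      rw [sampleAvg, ← avg_avg_removeNth]
      exact mul_log_avg_le fun j => (ha.trans_le (avg_mem_Icc fun ℓ => hz _).1).le
  calc _ ≤ ∫ z, avg (fun j => H (z.1, j.removeNth z.2)) ∂sampleLaw P Q (n + 2) := by
        refine integral_mono_ae (integrable_sampleAvg_mul_log hg ha hgb (n + 2)) ?_ hjensen
        simpa only [avg] using (integrable_finsetSum _ fun j _ => hint j).div_const _
    _ = ∫ z, H z ∂sampleLaw P Q (n + 1) := by
        rw [integral_avg hint]
        simp only [(measurePreserving_sample_removeNth P Q _).integral_comp_of_aestronglyMeasurable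
          hHm.aestronglyMeasurable]
        exact avg_const _

theorem monotone_infoNCE (hg : Measurable g) (ha : 0 < a)
    (hgb : ∀ᵐ z ∂P.prod Q, g z ∈ Set.Icc a b) : Monotone (infoNCE P Q g) :=
  monotone_nat_of_le_succ fun n => by
    rw [infoNCE_eq hg ha hgb, infoNCE_eq hg ha hgb]
    linarith [integral_sampleAvg_mul_log_succ_le hg ha hgb n]

end Monotone

lemma integral_sampleLaw_withDensity {μ : Measure α} {ν : Measure β} [SigmaFinite μ]
    [SigmaFinite ν] {f : α → ℝ} {h : β → ℝ} (hf : Measurable f) (hh : Measurable h)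
    (hf0 : ∀ x, 0 ≤ f x) (hh0 : ∀ y, 0 ≤ h y)
    [SigmaFinite (ν.withDensity fun y => ENNReal.ofReal (h y))] {n : ℕ}
    (F : α × (Fin n → β) → ℝ) :
    ∫ z, F z ∂sampleLaw (μ.withDensity fun x => ENNReal.ofReal (f x))
        (ν.withDensity fun y => ENNReal.ofReal (h y)) n =
      ∫ z, (f z.1 * ∏ i, h (z.2 i)) * F z ∂μ.prod (Measure.pi fun _ => ν) := by
  have hdens : (fun z : α × (Fin n → β) => ENNReal.ofReal (f z.1) * ∏ i, ENNReal.ofReal (h (z.2 i)))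
      = fun z => ((f z.1 * ∏ i, h (z.2 i)).toNNReal : ℝ≥0∞) := by
    ext z
    rw [← ENNReal.ofReal_prod_of_nonneg fun i _ => hh0 _, ← ENNReal.ofReal_mul (hf0 _)]
    rfl
  rw [sampleLaw, Measure.pi_withDensity _ hh.ennreal_ofReal,
    prod_withDensity hf.ennreal_ofReal (by fun_prop), hdens,
    integral_withDensity_eq_integral_smul (by fun_prop)]
  refine integral_congr_ae (ae_of_all _ fun z => ?_)
  simp only [NNReal.smul_def, smul_eq_mul,
    Real.coe_toNNReal _ (mul_nonneg (hf0 _) (prod_nonneg fun i _ => hh0 _))]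

end InfoNCE

theorem stmt6_general {X M : Type*} [MeasurableSpace X] [MeasurableSpace M]
    (μ : Measure X) (ν : Measure M) [SigmaFinite μ] [SigmaFinite ν]
    (p : X × M → ℝ) (hp : Measurable p) (hp0 : ∀ z, 0 ≤ p z)
    (hp1 : ∫ z, p z ∂(μ.prod ν) = 1)
    (pX : X → ℝ) (hpX : ∀ x, pX x = ∫ a, p (x, a) ∂ν)
    (pM : M → ℝ) (hpM : ∀ a, pM a = ∫ x, p (x, a) ∂μ)
    (hpXpos : ∀ᵐ x ∂μ, 0 < pX x) (hpMpos : ∀ᵐ a ∂ν, 0 < pM a)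
    (k : X × M → ℝ) (hk : ∀ z, k z = p z / (pX z.1 * pM z.2))
    (c₁ c₂ : ℝ) (hc₁ : 0 < c₁)
    (hkbd : ∀ᵐ z ∂(μ.prod ν), c₁ ≤ k z ∧ k z ≤ c₂)
    (ℒstar : ℕ → ℝ)
    (hℒstar : ∀ L : ℕ, ℒstar L = ∫ z : X × (Fin (L + 1) → M),
      p (z.1, z.2 0) * (∏ ℓ ∈ Finset.univ.erase (0 : Fin (L + 1)), pM (z.2 ℓ)) *
        Real.log (k (z.1, z.2 0) / ((1 / ((L : ℝ) + 1)) * ∑ ℓ, k (z.1, z.2 ℓ)))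
      ∂(μ.prod (Measure.pi fun _ : Fin (L + 1) => ν))) :
    ∀ L : ℕ, 1 ≤ L → ℒstar L ≤ ℒstar (L + 1) := by
  intro L _
  have hpXm : Measurable pX := (funext hpX) ▸ hp.stronglyMeasurable.integral_prod_right'.measurable
  have hpMm : Measurable pM := (funext hpM) ▸ hp.stronglyMeasurable.integral_prod_left'.measurable
  have hpX0 : ∀ x, 0 ≤ pX x := fun x => hpX x ▸ integral_nonneg fun _ => hp0 _
  have hpM0 : ∀ a, 0 ≤ pM a := fun a => hpM a ▸ integral_nonneg fun _ => hp0 _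
  set P := μ.withDensity fun x => ENNReal.ofReal (pX x)
  set Q := ν.withDensity fun a => ENNReal.ofReal (pM a)
  have hP : IsProbabilityMeasure P := by
    simpa only [← hpX] using isProbabilityMeasure_withDensity_marginal_fst hp0 hp1
  have hQ : IsProbabilityMeasure Q := by
    simpa only [← hpM] using isProbabilityMeasure_withDensity_marginal_snd hp0 hp1
  have hkm : Measurable k := (funext hk).symm ▸ (by fun_prop)
  have hkb : ∀ᵐ z ∂P.prod Q, k z ∈ Set.Icc c₁ c₂ :=
    ((withDensity_absolutelyContinuous μ _).prod (withDensity_absolutelyContinuous ν _)).ae_le hkbd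
  have hℒ : ∀ n, ℒstar n = InfoNCE.infoNCE P Q k n := fun n => by
    rw [hℒstar, InfoNCE.infoNCE, InfoNCE.integral_sampleLaw_withDensity hpXm hpMm hpX0 hpM0]
    refine integral_congr_ae ?_
    filter_upwards [Measure.quasiMeasurePreserving_fst.ae hpXpos,
      Measure.quasiMeasurePreserving_snd.ae (Measure.tendsto_eval_ae_ae.eventually hpMpos)]
      with z hx hm
    have hpk : p (z.1, z.2 0) = pX z.1 * pM (z.2 0) * k (z.1, z.2 0) := by
      rw [hk, mul_div_cancel₀ _ (mul_pos hx hm).ne']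
    rw [hpk, ← mul_prod_erase univ (fun ℓ => pM (z.2 ℓ)) (mem_univ 0), InfoNCE.sampleAvg,
      InfoNCE.avg, one_div_mul_eq_div]
    push_cast
    ring
  rw [hℒ, hℒ]
  exact InfoNCE.monotone_infoNCE hkm hc₁ hkb (Nat.le_succ L)

/-- The InfoNCE objective at the optimal critic is nondecreasing in the number `L` of
contrastive samples, assuming the density ratio `k` is bounded away from `0` and `∞`. -/
theorem stmt6 {X M : Type*} [MeasurableSpace X] [MeasurableSpace M]
    (μ : Measure X) (ν : Measure M) [SigmaFinite μ] [SigmaFinite ν]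
    (p : X × M → ℝ) (hp : Measurable p) (hp0 : ∀ z, 0 ≤ p z)
    (hp1 : ∫ z, p z ∂(μ.prod ν) = 1)
    (pX : X → ℝ) (hpX : ∀ x, pX x = ∫ a, p (x, a) ∂ν)
    (pM : M → ℝ) (hpM : ∀ a, pM a = ∫ x, p (x, a) ∂μ)
    (hppos : ∀ᵐ z ∂(μ.prod ν), 0 < p z)
    (hpXpos : ∀ᵐ x ∂μ, 0 < pX x) (hpMpos : ∀ᵐ a ∂ν, 0 < pM a)
    (hpXfin : ∀ᵐ x ∂μ, Integrable (fun a => p (x, a)) ν)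
    (hpMfin : ∀ᵐ a ∂ν, Integrable (fun x => p (x, a)) μ)
    (k : X × M → ℝ) (hk : ∀ z, k z = p z / (pX z.1 * pM z.2))
    (c₁ c₂ : ℝ) (hc₁ : 0 < c₁) (hc₁₂ : c₁ ≤ c₂)
    (hkbd : ∀ᵐ z ∂(μ.prod ν), c₁ ≤ k z ∧ k z ≤ c₂)
    (ℒstar : ℕ → ℝ)
    (hℒstar : ∀ L : ℕ, ℒstar L = ∫ z : X × (Fin (L + 1) → M),
      p (z.1, z.2 0) * (∏ ℓ ∈ Finset.univ.erase (0 : Fin (L + 1)), pM (z.2 ℓ)) *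
        Real.log (k (z.1, z.2 0) / ((1 / ((L : ℝ) + 1)) * ∑ ℓ, k (z.1, z.2 ℓ)))
      ∂(μ.prod (Measure.pi fun _ : Fin (L + 1) => ν))) :
    ∀ L : ℕ, 1 ≤ L → ℒstar L ≤ ℒstar (L + 1) :=
  stmt6_general μ ν p hp hp0 hp1 pX hpX pM hpM hpXpos hpMpos k hk c₁ c₂ hc₁ hkbd ℒstar hℒstar
end

section
/- Let (X, 𝒜, μ) and (M, ℬ, ν) be σ-finite measure spaces and let p : X × M → [0, ∞) be measurable with ∫∫ p d(μ ⊗ ν) = 1. Define the marginals p_X(x) = ∫ p(x, m) dν(m) and p_M(m) = ∫ p(x, m) dμ(x), assume p, p_X, p_M are positive and finite a.e., define the density ratio k(x, m) = p(x, m) / (p_X(x) p_M(m)) and the mutual information I(p) = ∫∫ p(x, m) log k(x, m) d(μ ⊗ ν). Assume there exist constants 0 < c₁ ≤ c₂ < ∞ with c₁ ≤ k(x, m) ≤ c₂ for (μ ⊗ ν)-a.e. (x, m). For each integer L ≥ 1 define ℒ*(L) = ∫_{X × M^{L+1}} p(x, m₀) (∏_{ℓ=1}^{L} p_M(m_ℓ))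 · log( k(x, m₀) / ((1/(L+1)) ∑_{ℓ=0}^{L} k(x, m_ℓ)) ) d(μ ⊗ ν^{⊗(L+1)}). Then ℒ*(L) → I(p) as L → ∞. -/
/-!
Fix `x` and write `W(m₀, …, m_L) = p(x, m₀) ∏_{ℓ ≥ 1} p_M(m_ℓ)` and `S` for the sample mean of
the `k(x, m_ℓ)`. The integrand of `ℒ*(L)` is `W log k(x, m₀) - W log S`, and the first term
integrates to the `x`-slice of `I(p)`. Instead of the strong law of large numbers we use the
quantitative bound `|log S - (S - 1)| ≤ (S - 1)² / c₁`: because `∫ p_M (k(x, ·) - 1) dν = 0`,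
all coordinates but `m₀` are centred, so `∫ W (S - 1) = O(p_X(x) / L)` and, the cross terms
vanishing, `∫ W (S - 1)² = O(p_X(x) / L)`. Integrating over `x` gives
`|ℒ*(L) - I(p)| ≤ C / (L + 1)`.
-/

open MeasureTheory Real Finset Set

lemma abs_log_le_max_abs_log {a b t : ℝ} (ha : 0 < a) (ht : t ∈ Icc a b) :
    |log t| ≤ max |log a| |log b| :=
  abs_le_max_abs_abs (log_le_log ha ht.1) (log_le_log (ha.trans_le ht.1) ht.2)

lemma abs_sub_one_le_max {a b t : ℝ} (ht : t ∈ Icc a b) : |t - 1| ≤ max |a - 1| |b - 1| :=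
  abs_le_max_abs_abs (sub_le_sub_right ht.1 1) (sub_le_sub_right ht.2 1)

lemma abs_log_div_le {c₁ c₂ a s : ℝ} (hc₁ : 0 < c₁) (ha : a ∈ Icc c₁ c₂) (hs : s ∈ Icc c₁ c₂) :
    |log (a / s)| ≤ log c₂ - log c₁ := by
  have ha0 := hc₁.trans_le ha.1
  have hs0 := hc₁.trans_le hs.1
  rw [log_div ha0.ne' hs0.ne', abs_sub_le_iff]
  constructor <;> linarith [log_le_log hc₁ ha.1, log_le_log ha0 ha.2, log_le_log hc₁ hs.1,
    log_le_log hs0 hs.2]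

lemma abs_log_sub_sub_one_le {c t : ℝ} (hc : 0 < c) (hct : c ≤ t) :
    |log t - (t - 1)| ≤ (t - 1) ^ 2 / c := by
  have ht : 0 < t := hc.trans_le hct
  have hupper := log_le_sub_one_of_pos ht
  have hlower := one_sub_inv_le_log_of_pos ht
  have hsq : (t - 1) ^ 2 / t ≤ (t - 1) ^ 2 / c := div_le_div_of_nonneg_left (sq_nonneg _) hc hct
  have hgap : t - 1 - (1 - t⁻¹) = (t - 1) ^ 2 / t := by field_simp
  rw [abs_sub_comm, abs_of_nonneg (by linarith)]
  linarith

lemma one_div_mul_sum_mem_Icc {n : ℕ} {a b : ℝ} {x : Fin (n + 1) → ℝ}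
    (hx : ∀ i, x i ∈ Icc a b) : 1 / ((n : ℝ) + 1) * ∑ i, x i ∈ Icc a b := by
  have hlo := card_nsmul_le_sum univ x a fun i _ => (hx i).1
  have hhi := sum_le_card_nsmul univ x b fun i _ => (hx i).2
  simp only [card_univ, Fintype.card_fin, nsmul_eq_mul, Nat.cast_add, Nat.cast_one] at hlo hhi
  have hn : (0 : ℝ) < n + 1 := by positivity
  rw [one_div_mul_eq_div]
  exact ⟨(le_div_iff₀ hn).2 (by linarith), (div_le_iff₀ hn).2 (by linarith)⟩

lemma prod_mulSingle_apply {ι M : Type*} [Fintype ι] [DecidableEq ι] (i : ι) (φ : M → ℝ)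
    (f : ι → M) : ∏ j, (Pi.mulSingle i φ : ι → M → ℝ) j (f j) = φ (f i) := by
  rw [prod_eq_single i (fun j _ hj => by simp [Pi.mulSingle_eq_of_ne hj]) (by simp)]
  simp

lemma prod_update_apply {ι M : Type*} [Fintype ι] [DecidableEq ι] (i₀ : ι) (q r : M → ℝ)
    (f : ι → M) :
    ∏ i, Function.update (fun _ => r) i₀ q i (f i) = q (f i₀) * ∏ i ∈ univ.erase i₀, r (f i) := by
  rw [← mul_prod_erase univ _ (mem_univ i₀), Function.update_self]
  exact congrArg _ (prod_congr rfl fun i hi => by rw [Function.update_of_ne (ne_of_mem_erase hi)])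

lemma abs_integral_mul_log_le {α : Type*} [MeasurableSpace α] {μ : Measure α} {W S : α → ℝ}
    {c c' : ℝ} (hc : 0 < c) (hW0 : ∀ a, 0 ≤ W a) (hW : Integrable W μ) (hS : Measurable S)
    (hSc : ∀ᵐ a ∂μ, S a ∈ Icc c c') :
    |∫ a, W a * log (S a) ∂μ| ≤
      |∫ a, W a * (S a - 1) ∂μ| + (∫ a, W a * (S a - 1) ^ 2 ∂μ) / c := by
  have hSB : ∀ᵐ a ∂μ, |S a - 1| ≤ max |c - 1| |c' - 1| := hSc.mono fun a ha => abs_sub_one_le_max ha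
  have hlog : Integrable (fun a => W a * log (S a)) μ :=
    hW.mul_bdd hS.log.aestronglyMeasurable (hSc.mono fun a ha => abs_log_le_max_abs_log hc ha)
  have hlin : Integrable (fun a => W a * (S a - 1)) μ := hW.mul_bdd (by fun_prop) hSB
  have hsq : Integrable (fun a => W a * (S a - 1) ^ 2) μ :=
    hW.mul_bdd (by fun_prop) (hSB.mono fun a ha => by
      rw [norm_pow, Real.norm_eq_abs]; exact pow_le_pow_left₀ (abs_nonneg _) ha 2)
  have hdiff : |∫ a, W a * log (S a) ∂μ - ∫ a, W a * (S a - 1) ∂μ| ≤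
      (∫ a, W a * (S a - 1) ^ 2 ∂μ) / c := by
    rw [← integral_sub hlog hlin, ← integral_div c, ← Real.norm_eq_abs]
    refine norm_integral_le_of_norm_le (hsq.div_const c) ?_
    filter_upwards [hSc] with a ha
    rw [← mul_sub, norm_mul, Real.norm_eq_abs, Real.norm_eq_abs, abs_of_nonneg (hW0 a),
      mul_div_assoc]
    exact mul_le_mul_of_nonneg_left (abs_log_sub_sub_one_le hc ha.1) (hW0 a)
  linarith [abs_sub_abs_le_abs_sub (∫ a, W a * log (S a) ∂μ) (∫ a, W a * (S a - 1) ∂μ)]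

section ProductDensity

variable {ι M : Type*} [Fintype ι] [MeasurableSpace M] {ν : Measure M} [SigmaFinite ν]

lemma integral_prod_mul_prod (d h : ι → M → ℝ) :
    ∫ f : ι → M, (∏ i, d i (f i)) * ∏ i, h i (f i) ∂Measure.pi (fun _ => ν) =
      ∏ i, ∫ m, d i m * h i m ∂ν := by
  simp_rw [← prod_mul_distrib]
  exact integral_fintype_prod_eq_prod fun i m => d i m * h i m

lemma integral_prod_mul_prod_eq_zero {d h : ι → M → ℝ} (k : ι)
    (hk : ∫ m, d k m * h k m ∂ν = 0) :
    ∫ f : ι → M, (∏ i, d i (f i)) * ∏ i, h i (f i) ∂Measure.pi (fun _ => ν) = 0 := by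
  rw [integral_prod_mul_prod]
  exact prod_eq_zero (mem_univ k) hk

lemma ae_pi_forall_of_ae {P : M → Prop} (h : ∀ᵐ m ∂ν, P m) :
    ∀ᵐ f ∂Measure.pi (fun _ : ι => ν), ∀ i, P (f i) :=
  ae_all_iff.2 fun _ => Measure.tendsto_eval_ae_ae.eventually h

variable [DecidableEq ι] {d : ι → M → ℝ} {g : M → ℝ} {B : ℝ}

lemma integral_prod_mul_apply_eq_zero {φ : M → ℝ} {i : ι} (hi : ∫ m, d i m * φ m ∂ν = 0) :
    ∫ f : ι → M, (∏ j, d j (f j)) * φ (f i) ∂Measure.pi (fun _ => ν) = 0 := by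
  simpa only [prod_mulSingle_apply] using
    integral_prod_mul_prod_eq_zero (h := Pi.mulSingle i φ) i (by simpa using hi)

lemma integral_prod_mul_apply_mul_apply_eq_zero {φ ψ : M → ℝ} {i j : ι} (hij : i ≠ j)
    (hj : ∫ m, d j m * ψ m ∂ν = 0) :
    ∫ f : ι → M, (∏ k, d k (f k)) * (φ (f i) * ψ (f j)) ∂Measure.pi (fun _ => ν) = 0 := by
  have := integral_prod_mul_prod_eq_zero (ν := ν) (d := d)
    (h := Pi.mulSingle i φ * Pi.mulSingle j ψ) j (by simpa [Pi.mulSingle_eq_of_ne' hij] using hj)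
  simpa only [Pi.mul_apply, prod_mul_distrib, prod_mulSingle_apply] using this

lemma integral_prod_update_mul_apply (i₀ : ι) (q : M → ℝ) {r : M → ℝ}
    (hr1 : ∫ m, r m ∂ν = 1) (φ : M → ℝ) :
    ∫ f : ι → M, (∏ i, Function.update (fun _ => r) i₀ q i (f i)) * φ (f i₀)
      ∂Measure.pi (fun _ => ν) = ∫ m, q m * φ m ∂ν := by
  have h := integral_prod_mul_prod (ν := ν) (Function.update (fun _ => r) i₀ q) (Pi.mulSingle i₀ φ)
  simp only [prod_mulSingle_apply] at h
  rw [h, ← mul_prod_erase univ _ (mem_univ i₀)]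
  simp only [Function.update_self, Pi.mulSingle_eq_same]
  rw [prod_eq_one fun i hi => ?_, mul_one]
  simp [Function.update_of_ne (ne_of_mem_erase hi), Pi.mulSingle_eq_of_ne (ne_of_mem_erase hi), hr1]

lemma integral_prod_update (i₀ : ι) (q : M → ℝ) {r : M → ℝ} (hr1 : ∫ m, r m ∂ν = 1) :
    ∫ f : ι → M, ∏ i, Function.update (fun _ => r) i₀ q i (f i) ∂Measure.pi (fun _ => ν) =
      ∫ m, q m ∂ν := by
  simpa using integral_prod_update_mul_apply (ν := ν) i₀ q hr1 1

omit [Fintype ι] [SigmaFinite ν] in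
lemma integrable_update {q r : M → ℝ} (hq : Integrable q ν) (hr : Integrable r ν) (i₀ i : ι) :
    Integrable (Function.update (fun _ => r) i₀ q i) ν :=
  (Function.forall_update_iff _ fun _ (h : M → ℝ) => Integrable h ν).2 ⟨hq, fun _ _ => hr⟩ i

omit [Fintype ι] [MeasurableSpace M] [SigmaFinite ν] in
lemma update_nonneg {q r : M → ℝ} (hq0 : ∀ m, 0 ≤ q m) (hr0 : ∀ m, 0 ≤ r m) (i₀ i : ι) (m : M) :
    0 ≤ Function.update (fun _ => r) i₀ q i m :=
  (Function.forall_update_iff _ fun _ (h : M → ℝ) => ∀ m, 0 ≤ h m).2 ⟨hq0, fun _ _ => hr0⟩ i m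

omit [DecidableEq ι] in
lemma integrable_prod_mul_apply (hd : ∀ i, Integrable (d i) ν) (hg : Measurable g)
    (hgB : ∀ᵐ m ∂ν, |g m| ≤ B) (i : ι) :
    Integrable (fun f : ι → M => (∏ k, d k (f k)) * g (f i)) (Measure.pi fun _ => ν) := by
  refine (Integrable.fintype_prod hd).mul_bdd (c := B)
    (hg.comp (measurable_pi_apply i)).aestronglyMeasurable ?_
  filter_upwards [ae_pi_forall_of_ae hgB] with f hf
  exact hf i

omit [DecidableEq ι] in
lemma integrable_prod_mul_apply_mul_apply (hd : ∀ i, Integrable (d i) ν) (hg : Measurable g)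
    (hgB : ∀ᵐ m ∂ν, |g m| ≤ B) (i j : ι) :
    Integrable (fun f : ι → M => (∏ k, d k (f k)) * (g (f i) * g (f j)))
      (Measure.pi fun _ => ν) := by
  refine (Integrable.fintype_prod hd).mul_bdd (c := B * B) (by fun_prop) ?_
  filter_upwards [ae_pi_forall_of_ae hgB] with f hf
  rw [norm_mul, Real.norm_eq_abs, Real.norm_eq_abs]
  exact mul_le_mul (hf i) (hf j) (abs_nonneg _) ((abs_nonneg _).trans (hf i))

lemma integral_prod_mul_sum_apply (i₀ : ι) (hcent : ∀ i ≠ i₀, ∫ m, d i m * g m ∂ν = 0)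
    (hd : ∀ i, Integrable (d i) ν) (hg : Measurable g) (hgB : ∀ᵐ m ∂ν, |g m| ≤ B) :
    ∫ f : ι → M, (∏ k, d k (f k)) * ∑ i, g (f i) ∂Measure.pi (fun _ => ν) =
      ∫ f : ι → M, (∏ k, d k (f k)) * g (f i₀) ∂Measure.pi (fun _ => ν) := by
  simp_rw [mul_sum]
  rw [integral_finsetSum _ fun i _ => integrable_prod_mul_apply hd hg hgB i]
  exact sum_eq_single i₀ (fun i _ hi => integral_prod_mul_apply_eq_zero (hcent i hi)) (by simp)

lemma integral_prod_mul_apply_mul_apply_eq_zero_of_ne (i₀ : ι)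
    (hcent : ∀ i ≠ i₀, ∫ m, d i m * g m ∂ν = 0) {i j : ι} (hij : i ≠ j) :
    ∫ f : ι → M, (∏ k, d k (f k)) * (g (f i) * g (f j)) ∂Measure.pi (fun _ => ν) = 0 := by
  by_cases hj : j = i₀
  · subst hj
    rw [← integral_prod_mul_apply_mul_apply_eq_zero (φ := g) hij.symm (hcent i hij)]
    congr 1 with f
    ring
  · exact integral_prod_mul_apply_mul_apply_eq_zero hij (hcent j hj)

omit [DecidableEq ι] in
lemma integral_prod_mul_apply_mul_self_le (hd0 : ∀ i m, 0 ≤ d i m) (hd : ∀ i, Integrable (d i) ν)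
    (hg : Measurable g) (hgB : ∀ᵐ m ∂ν, |g m| ≤ B) (i : ι) :
    ∫ f : ι → M, (∏ k, d k (f k)) * (g (f i) * g (f i)) ∂Measure.pi (fun _ => ν) ≤
      B ^ 2 * ∫ f : ι → M, ∏ k, d k (f k) ∂Measure.pi (fun _ => ν) := by
  rw [← integral_const_mul]
  refine integral_mono_ae (integrable_prod_mul_apply_mul_apply hd hg hgB i i)
    ((Integrable.fintype_prod hd).const_mul _) ?_
  filter_upwards [ae_pi_forall_of_ae hgB] with f hf
  rw [mul_comm (B ^ 2), ← sq]
  exact mul_le_mul_of_nonneg_left (sq_le_sq' (abs_le.1 (hf i)).1 (abs_le.1 (hf i)).2)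
    (prod_nonneg fun k _ => hd0 k (f k))

lemma integral_prod_mul_sum_apply_sq_le (i₀ : ι) (hcent : ∀ i ≠ i₀, ∫ m, d i m * g m ∂ν = 0)
    (hd0 : ∀ i m, 0 ≤ d i m) (hd : ∀ i, Integrable (d i) ν) (hg : Measurable g)
    (hgB : ∀ᵐ m ∂ν, |g m| ≤ B) :
    ∫ f : ι → M, (∏ k, d k (f k)) * (∑ i, g (f i)) ^ 2 ∂Measure.pi (fun _ => ν) ≤
      Fintype.card ι * B ^ 2 * ∫ f : ι → M, ∏ k, d k (f k) ∂Measure.pi (fun _ => ν) := by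
  have hint := integrable_prod_mul_apply_mul_apply hd hg hgB
  calc ∫ f : ι → M, (∏ k, d k (f k)) * (∑ i, g (f i)) ^ 2 ∂Measure.pi (fun _ => ν)
      = ∑ i, ∑ j, ∫ f : ι → M, (∏ k, d k (f k)) * (g (f i) * g (f j))
          ∂Measure.pi (fun _ => ν) := by
        simp_rw [sq, sum_mul_sum, mul_sum]
        rw [integral_finsetSum _ fun i _ => integrable_finsetSum _ fun j _ => hint i j]
        exact sum_congr rfl fun i _ => integral_finsetSum _ fun j _ => hint i j
    _ = ∑ i, ∫ f : ι → M, (∏ k, d k (f k)) * (g (f i) * g (f i)) ∂Measure.pi (fun _ => ν) :=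
        sum_congr rfl fun i _ => sum_eq_single i
          (fun j _ hj => integral_prod_mul_apply_mul_apply_eq_zero_of_ne i₀ hcent hj.symm)
          (by simp)
    _ ≤ ∑ _i : ι, B ^ 2 * ∫ f : ι → M, ∏ k, d k (f k) ∂Measure.pi (fun _ => ν) :=
        sum_le_sum fun i _ => integral_prod_mul_apply_mul_self_le hd0 hd hg hgB i
    _ = Fintype.card ι * B ^ 2 * ∫ f : ι → M, ∏ k, d k (f k) ∂Measure.pi (fun _ => ν) := by
        rw [sum_const, card_univ, nsmul_eq_mul, mul_assoc]

end ProductDensity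

section InfoNCE

variable {M : Type*} [MeasurableSpace M] {ν : Measure M} [SigmaFinite ν]

noncomputable def sampleMean {n : ℕ} (κ : M → ℝ) (f : Fin (n + 1) → M) : ℝ :=
  1 / ((n : ℝ) + 1) * ∑ ℓ, κ (f ℓ)

/-- The integrand of `ℒ*(L)` at a fixed `x`, with `q = p(x, ·)`, `r = p_M`, `κ = k(x, ·)`,
`n = L` and `f = (m₀, …, m_L)`. -/
noncomputable def infoNCEIntegrand (q r κ : M → ℝ) (n : ℕ) (f : Fin (n + 1) → M) : ℝ :=
  q (f 0) * (∏ ℓ ∈ univ.erase 0, r (f ℓ)) * log (κ (f 0) / sampleMean κ f)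

variable {n : ℕ} {q r κ : M → ℝ} {c₁ c₂ B : ℝ}

omit [MeasurableSpace M] in
lemma sampleMean_sub_one (κ : M → ℝ) (f : Fin (n + 1) → M) :
    sampleMean κ f - 1 = (n + 1 : ℝ)⁻¹ * ∑ i, (κ (f i) - 1) := by
  rw [sampleMean, sum_sub_distrib]
  simp only [sum_const, card_univ, Fintype.card_fin, nsmul_eq_mul, Nat.cast_add, Nat.cast_one,
    mul_one]
  field_simp

omit [MeasurableSpace M] in
lemma infoNCEIntegrand_eq (q r κ : M → ℝ) (n : ℕ) (f : Fin (n + 1) → M) :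
    infoNCEIntegrand q r κ n f =
      (∏ i, Function.update (fun _ => r) 0 q i (f i)) * log (κ (f 0) / sampleMean κ f) := by
  rw [infoNCEIntegrand, prod_update_apply]

lemma measurable_sampleMean (hκ : Measurable κ) : Measurable (sampleMean (n := n) κ) := by
  unfold sampleMean
  fun_prop

lemma integral_prod_mul_sampleMean_sub_one {d : Fin (n + 1) → M → ℝ}
    (hcent : ∀ i ≠ 0, ∫ m, d i m * (κ m - 1) ∂ν = 0) (hd : ∀ i, Integrable (d i) ν)
    (hκ : Measurable κ) (hκB : ∀ᵐ m ∂ν, |κ m - 1| ≤ B) :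
    ∫ f, (∏ i, d i (f i)) * (sampleMean κ f - 1) ∂Measure.pi (fun _ => ν) =
      (n + 1 : ℝ)⁻¹ * ∫ f, (∏ i, d i (f i)) * (κ (f 0) - 1) ∂Measure.pi (fun _ => ν) := by
  simp_rw [sampleMean_sub_one, mul_left_comm _ (n + 1 : ℝ)⁻¹]
  rw [integral_const_mul, integral_prod_mul_sum_apply 0 hcent hd (hκ.sub_const 1) hκB]

lemma integral_prod_mul_sampleMean_sub_one_sq_le {d : Fin (n + 1) → M → ℝ}
    (hcent : ∀ i ≠ 0, ∫ m, d i m * (κ m - 1) ∂ν = 0) (hd0 : ∀ i m, 0 ≤ d i m)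
    (hd : ∀ i, Integrable (d i) ν) (hκ : Measurable κ) (hκB : ∀ᵐ m ∂ν, |κ m - 1| ≤ B) :
    ∫ f, (∏ i, d i (f i)) * (sampleMean κ f - 1) ^ 2 ∂Measure.pi (fun _ => ν) ≤
      B ^ 2 / (n + 1) * ∫ f, ∏ i, d i (f i) ∂Measure.pi (fun _ => ν) := by
  simp_rw [sampleMean_sub_one, mul_pow, mul_left_comm _ ((n + 1 : ℝ)⁻¹ ^ 2)]
  rw [integral_const_mul]
  calc _ ≤ (n + 1 : ℝ)⁻¹ ^ 2 *
        ((n + 1 : ℝ) * B ^ 2 * ∫ f, ∏ i, d i (f i) ∂Measure.pi (fun _ => ν)) := by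
        gcongr
        simpa using integral_prod_mul_sum_apply_sq_le 0 hcent hd0 hd (hκ.sub_const 1) hκB
    _ = _ := by field_simp

lemma abs_integral_prod_update_mul_log_sampleMean_le (hq0 : ∀ m, 0 ≤ q m) (hq : Integrable q ν)
    (hr0 : ∀ m, 0 ≤ r m) (hr : Integrable r ν) (hr1 : ∫ m, r m ∂ν = 1) (hκ : Measurable κ)
    (hc₁ : 0 < c₁) (hκbd : ∀ᵐ m ∂ν, κ m ∈ Icc c₁ c₂) (hrκ : ∫ m, r m * κ m ∂ν = 1) :
    |∫ f : Fin (n + 1) → M, (∏ i, Function.update (fun _ => r) 0 q i (f i)) *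
        log (sampleMean κ f) ∂Measure.pi (fun _ => ν)| ≤
      (max |c₁ - 1| |c₂ - 1| + max |c₁ - 1| |c₂ - 1| ^ 2 / c₁) / (n + 1) * ∫ m, q m ∂ν := by
  set B := max |c₁ - 1| |c₂ - 1|
  set d := Function.update (fun _ => r) (0 : Fin (n + 1)) q
  have hd := integrable_update hq hr (0 : Fin (n + 1))
  have hd0 := update_nonneg hq0 hr0 (0 : Fin (n + 1))
  have hκB : ∀ᵐ m ∂ν, |κ m - 1| ≤ B := hκbd.mono fun m hm => abs_sub_one_le_max hm
  have hcent : ∀ i ≠ 0, ∫ m, d i m * (κ m - 1) ∂ν = 0 := fun i hi => by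
    have hrκint : Integrable (fun m => r m * κ m) ν := hr.mul_bdd hκ.aestronglyMeasurable
      (hκbd.mono fun m hm => by rw [Real.norm_eq_abs, abs_of_pos (hc₁.trans_le hm.1)]; exact hm.2)
    simp only [d, Function.update_of_ne hi, mul_sub, mul_one]
    rw [integral_sub hrκint hr, hrκ, hr1, sub_self]
  have hlog := abs_integral_mul_log_le hc₁ (fun f => prod_nonneg fun i _ => hd0 i (f i))
    (Integrable.fintype_prod hd) (measurable_sampleMean hκ)
    ((ae_pi_forall_of_ae hκbd).mono fun f hf => one_div_mul_sum_mem_Icc hf)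
  rw [integral_prod_mul_sampleMean_sub_one hcent hd hκ hκB,
    integral_prod_update_mul_apply 0 q hr1 fun m => κ m - 1] at hlog
  have hquad := integral_prod_mul_sampleMean_sub_one_sq_le hcent hd0 hd hκ hκB
  rw [integral_prod_update 0 q hr1] at hquad
  have hqκ : |∫ m, q m * (κ m - 1) ∂ν| ≤ B * ∫ m, q m ∂ν := by
    rw [← integral_const_mul, ← Real.norm_eq_abs]
    refine norm_integral_le_of_norm_le (hq.const_mul B) ?_
    filter_upwards [hκB] with m hm
    rw [norm_mul, Real.norm_eq_abs, abs_of_nonneg (hq0 m), mul_comm]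
    exact mul_le_mul_of_nonneg_right hm (hq0 m)
  calc _ ≤ (n + 1 : ℝ)⁻¹ * (B * ∫ m, q m ∂ν) + B ^ 2 / (n + 1) * (∫ m, q m ∂ν) / c₁ := by
        refine hlog.trans ?_
        rw [abs_mul, abs_of_pos (by positivity)]
        gcongr
    _ = _ := by field_simp

omit [MeasurableSpace M] in
lemma norm_infoNCEIntegrand_le (hq0 : ∀ m, 0 ≤ q m) (hr0 : ∀ m, 0 ≤ r m) (hc₁ : 0 < c₁)
    {f : Fin (n + 1) → M} (hf : ∀ i, κ (f i) ∈ Icc c₁ c₂) :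
    ‖infoNCEIntegrand q r κ n f‖ ≤
      (log c₂ - log c₁) * ∏ i, Function.update (fun _ => r) 0 q i (f i) := by
  have hW0 : 0 ≤ ∏ i, Function.update (fun _ => r) 0 q i (f i) :=
    prod_nonneg fun i _ => update_nonneg hq0 hr0 0 i _
  rw [infoNCEIntegrand_eq, norm_mul, Real.norm_of_nonneg hW0, Real.norm_eq_abs, mul_comm]
  exact mul_le_mul_of_nonneg_right (abs_log_div_le hc₁ (hf 0) (one_div_mul_sum_mem_Icc hf)) hW0

lemma integrable_infoNCEIntegrand (hq : Integrable q ν) (hr : Integrable r ν) (hκ : Measurable κ)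
    (hc₁ : 0 < c₁) (hκbd : ∀ᵐ m ∂ν, κ m ∈ Icc c₁ c₂) :
    Integrable (infoNCEIntegrand q r κ n) (Measure.pi fun _ => ν) := by
  refine ((Integrable.fintype_prod (integrable_update hq hr 0)).mul_bdd (c := log c₂ - log c₁)
    ((hκ.comp (measurable_pi_apply 0)).div (measurable_sampleMean hκ)).log.aestronglyMeasurable
    ?_).congr
    (.of_forall fun f => (infoNCEIntegrand_eq q r κ n f).symm)
  filter_upwards [ae_pi_forall_of_ae hκbd] with f hf
  exact abs_log_div_le hc₁ (hf 0) (one_div_mul_sum_mem_Icc hf)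

lemma integral_norm_infoNCEIntegrand_le (hq0 : ∀ m, 0 ≤ q m) (hq : Integrable q ν)
    (hr0 : ∀ m, 0 ≤ r m) (hr : Integrable r ν) (hr1 : ∫ m, r m ∂ν = 1) (hκ : Measurable κ)
    (hc₁ : 0 < c₁) (hκbd : ∀ᵐ m ∂ν, κ m ∈ Icc c₁ c₂) :
    ∫ f, ‖infoNCEIntegrand q r κ n f‖ ∂Measure.pi (fun _ => ν) ≤
      (log c₂ - log c₁) * ∫ m, q m ∂ν := by
  rw [← integral_prod_update (0 : Fin (n + 1)) q hr1, ← integral_const_mul]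
  refine integral_mono_ae (integrable_infoNCEIntegrand hq hr hκ hc₁ hκbd).norm
    ((Integrable.fintype_prod (integrable_update hq hr 0)).const_mul _) ?_
  filter_upwards [ae_pi_forall_of_ae hκbd] with f hf
  exact norm_infoNCEIntegrand_le hq0 hr0 hc₁ hf

theorem abs_integral_infoNCEIntegrand_sub_le (hq0 : ∀ m, 0 ≤ q m) (hq : Integrable q ν)
    (hr0 : ∀ m, 0 ≤ r m) (hr : Integrable r ν) (hr1 : ∫ m, r m ∂ν = 1) (hκ : Measurable κ)
    (hc₁ : 0 < c₁) (hκbd : ∀ᵐ m ∂ν, κ m ∈ Icc c₁ c₂) (hrκ : ∫ m, r m * κ m ∂ν = 1) :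
    |∫ f, infoNCEIntegrand q r κ n f ∂Measure.pi (fun _ => ν) - ∫ m, q m * log (κ m) ∂ν| ≤
      (max |c₁ - 1| |c₂ - 1| + max |c₁ - 1| |c₂ - 1| ^ 2 / c₁) / (n + 1) * ∫ m, q m ∂ν := by
  have hd := integrable_update hq hr (0 : Fin (n + 1))
  have hSσ : ∀ᵐ f : Fin (n + 1) → M ∂Measure.pi (fun _ => ν), sampleMean κ f ∈ Icc c₁ c₂ :=
    (ae_pi_forall_of_ae hκbd).mono fun f hf => one_div_mul_sum_mem_Icc hf
  have hsplit : infoNCEIntegrand q r κ n =ᵐ[Measure.pi fun _ => ν] fun f =>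
      (∏ i, Function.update (fun _ => r) 0 q i (f i)) * log (κ (f 0)) -
        (∏ i, Function.update (fun _ => r) 0 q i (f i)) * log (sampleMean κ f) := by
    filter_upwards [ae_pi_forall_of_ae hκbd, hSσ] with f hf hS
    rw [infoNCEIntegrand_eq, log_div (hc₁.trans_le (hf 0).1).ne' (hc₁.trans_le hS.1).ne', mul_sub]
  have hlogκ := integrable_prod_mul_apply hd hκ.log
    (hκbd.mono fun m hm => abs_log_le_max_abs_log hc₁ hm) 0
  have hlogS := (Integrable.fintype_prod hd).mul_bdd (measurable_sampleMean hκ).log.aestronglyMeasurable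
    (hSσ.mono fun f hf => abs_log_le_max_abs_log hc₁ hf)
  rw [integral_congr_ae hsplit, integral_sub hlogκ hlogS,
    integral_prod_update_mul_apply 0 q hr1 fun m => log (κ m), sub_sub_cancel_left, abs_neg]
  exact abs_integral_prod_update_mul_log_sampleMean_le hq0 hq hr0 hr hr1 hκ hc₁ hκbd hrκ

end InfoNCE

lemma abs_integral_prod_sub_le_of_ae {X Y Z : Type*} [MeasurableSpace X] [MeasurableSpace Y]
    [MeasurableSpace Z] {μ : Measure X} {σ : Measure Y} {ν : Measure Z} [SigmaFinite μ]
    [SigmaFinite σ] [SigmaFinite ν] {F : X × Y → ℝ} {G : X × Z → ℝ} {w : X → ℝ} {D ε : ℝ}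
    (hF : AEStronglyMeasurable F (μ.prod σ)) (hG : Integrable G (μ.prod ν)) (hw : Integrable w μ)
    (hFG : ∀ᵐ x ∂μ, Integrable (fun y => F (x, y)) σ ∧ ∫ y, ‖F (x, y)‖ ∂σ ≤ D * w x ∧
      |∫ y, F (x, y) ∂σ - ∫ z, G (x, z) ∂ν| ≤ ε * w x) :
    |∫ a, F a ∂μ.prod σ - ∫ b, G b ∂μ.prod ν| ≤ ε * ∫ x, w x ∂μ := by
  have hFint : Integrable F (μ.prod σ) := by
    refine (integrable_prod_iff hF).2 ⟨hFG.mono fun x hx => hx.1, ?_⟩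
    refine (hw.const_mul D).mono' hF.norm.integral_prod_right' (hFG.mono fun x hx => ?_)
    rw [Real.norm_of_nonneg (integral_nonneg fun _ => norm_nonneg _)]
    exact hx.2.1
  rw [integral_prod F hFint, integral_prod G hG,
    ← integral_sub hFint.integral_prod_left hG.integral_prod_left, ← integral_const_mul,
    ← Real.norm_eq_abs]
  exact norm_integral_le_of_norm_le (hw.const_mul ε) (hFG.mono fun x hx => hx.2.2)

lemma ae_integral_mul_ratio_eq_one {X M : Type*} [MeasurableSpace X] [MeasurableSpace M]
    {μ : Measure X} {ν : Measure M} {p : X × M → ℝ} {pX : X → ℝ} {pM : M → ℝ} {k : X × M → ℝ}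
    (hpX : ∀ x, pX x = ∫ a, p (x, a) ∂ν) (hpXpos : ∀ᵐ x ∂μ, 0 < pX x)
    (hpMpos : ∀ᵐ a ∂ν, 0 < pM a) (hk : ∀ z, k z = p z / (pX z.1 * pM z.2)) :
    ∀ᵐ x ∂μ, ∫ a, pM a * k (x, a) ∂ν = 1 := by
  filter_upwards [hpXpos] with x hx
  calc ∫ a, pM a * k (x, a) ∂ν = ∫ a, p (x, a) / pX x ∂ν := integral_congr_ae <| by
        filter_upwards [hpMpos] with a ha
        rw [hk]
        field_simp
    _ = 1 := by rw [integral_div, ← hpX, div_self hx.ne']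

theorem stmt7_general {X M : Type*} [MeasurableSpace X] [MeasurableSpace M]
    (μ : Measure X) (ν : Measure M) [SigmaFinite μ] [SigmaFinite ν]
    (p : X × M → ℝ) (hp : Measurable p) (hp0 : ∀ z, 0 ≤ p z)
    (hp1 : ∫ z, p z ∂(μ.prod ν) = 1)
    (pX : X → ℝ) (hpX : ∀ x, pX x = ∫ a, p (x, a) ∂ν)
    (pM : M → ℝ) (hpM : ∀ a, pM a = ∫ x, p (x, a) ∂μ)
    (hpXpos : ∀ᵐ x ∂μ, 0 < pX x) (hpMpos : ∀ᵐ a ∂ν, 0 < pM a)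
    (hpXfin : ∀ᵐ x ∂μ, Integrable (fun a => p (x, a)) ν)
    (k : X × M → ℝ) (hk : ∀ z, k z = p z / (pX z.1 * pM z.2))
    (c₁ c₂ : ℝ) (hc₁ : 0 < c₁)
    (hkbd : ∀ᵐ z ∂(μ.prod ν), c₁ ≤ k z ∧ k z ≤ c₂)
    (ℒstar : ℕ → ℝ)
    (hℒstar : ∀ L : ℕ, ℒstar L = ∫ z : X × (Fin (L + 1) → M),
      p (z.1, z.2 0) * (∏ ℓ ∈ Finset.univ.erase (0 : Fin (L + 1)), pM (z.2 ℓ)) *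
        Real.log (k (z.1, z.2 0) / ((1 / ((L : ℝ) + 1)) * ∑ ℓ, k (z.1, z.2 ℓ)))
      ∂(μ.prod (Measure.pi fun _ : Fin (L + 1) => ν))) :
    Filter.Tendsto ℒstar Filter.atTop
      (nhds (∫ z, p z * Real.log (k z) ∂(μ.prod ν))) := by
  have hpint : Integrable p (μ.prod ν) := integrable_of_integral_eq_one hp1
  have hpXint : Integrable pX μ := hpint.integral_prod_left.congr (.of_forall fun x => (hpX x).symm)
  have hpMint : Integrable pM ν := hpint.integral_prod_right.congr (.of_forall fun a => (hpM a).symm)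
  have hpX1 : ∫ x, pX x ∂μ = 1 := by simp_rw [hpX]; rwa [← integral_prod p hpint]
  have hpM1 : ∫ a, pM a ∂ν = 1 := by simp_rw [hpM]; rwa [← integral_prod_symm p hpint]
  have hpM0 : ∀ a, 0 ≤ pM a := fun a => (hpM a).symm ▸ integral_nonneg fun x => hp0 (x, a)
  have hpXm : Measurable pX := funext hpX ▸ hp.stronglyMeasurable.integral_prod_right'.measurable
  have hpMm : Measurable pM := funext hpM ▸ hp.stronglyMeasurable.integral_prod_left'.measurable
  have hkm : Measurable k := funext hk ▸ by fun_prop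
  have hI : Integrable (fun z => p z * Real.log (k z)) (μ.prod ν) :=
    hpint.mul_bdd hkm.log.aestronglyMeasurable (hkbd.mono fun z hz => abs_log_le_max_abs_log hc₁ hz)
  have key : ∀ L : ℕ, |ℒstar L - ∫ z, p z * Real.log (k z) ∂(μ.prod ν)| ≤
      (max |c₁ - 1| |c₂ - 1| + max |c₁ - 1| |c₂ - 1| ^ 2 / c₁) / ((L : ℝ) + 1) := by
    intro L
    rw [hℒstar L]
    refine (abs_integral_prod_sub_le_of_ae (D := Real.log c₂ - Real.log c₁)
      (F := fun z => infoNCEIntegrand (fun m => p (z.1, m)) pM (fun m => k (z.1, m)) L z.2)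
      (by unfold infoNCEIntegrand sampleMean; fun_prop : Measurable _).aestronglyMeasurable
      hI hpXint ?_).trans_eq (by rw [hpX1, mul_one])
    filter_upwards [hpXfin, ae_integral_mul_ratio_eq_one hpX hpXpos hpMpos hk,
      Measure.ae_ae_of_ae_prod hkbd] with x hxq hxκ hxbd
    have hκ : Measurable fun m => k (x, m) := hkm.comp measurable_prodMk_left
    simp only [hpX x]
    exact ⟨integrable_infoNCEIntegrand hxq hpMint hκ hc₁ hxbd,
      integral_norm_infoNCEIntegrand_le (fun m => hp0 _) hxq hpM0 hpMint hpM1 hκ hc₁ hxbd,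
      abs_integral_infoNCEIntegrand_sub_le (fun m => hp0 _) hxq hpM0 hpMint hpM1 hκ hc₁ hxbd hxκ⟩
  refine tendsto_iff_norm_sub_tendsto_zero.2 (squeeze_zero (fun _ => norm_nonneg _) key ?_)
  simpa only [mul_one_div, mul_zero] using tendsto_one_div_add_atTop_nhds_zero_nat.const_mul
    (max |c₁ - 1| |c₂ - 1| + max |c₁ - 1| |c₂ - 1| ^ 2 / c₁)

/-- Tightness of the InfoNCE bound at the optimal critic: as the number of contrastive
samples `L → ∞`, the objective `ℒ*(L)` converges to the mutual information
`I(p) = ∫ p log k`, assuming the density ratio `k` is bounded away from `0` and `∞`. -/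
theorem stmt7 {X M : Type*} [MeasurableSpace X] [MeasurableSpace M]
    (μ : Measure X) (ν : Measure M) [SigmaFinite μ] [SigmaFinite ν]
    (p : X × M → ℝ) (hp : Measurable p) (hp0 : ∀ z, 0 ≤ p z)
    (hp1 : ∫ z, p z ∂(μ.prod ν) = 1)
    (pX : X → ℝ) (hpX : ∀ x, pX x = ∫ a, p (x, a) ∂ν)
    (pM : M → ℝ) (hpM : ∀ a, pM a = ∫ x, p (x, a) ∂μ)
    (hppos : ∀ᵐ z ∂(μ.prod ν), 0 < p z)
    (hpXpos : ∀ᵐ x ∂μ, 0 < pX x) (hpMpos : ∀ᵐ a ∂ν, 0 < pM a)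
    (hpXfin : ∀ᵐ x ∂μ, Integrable (fun a => p (x, a)) ν)
    (hpMfin : ∀ᵐ a ∂ν, Integrable (fun x => p (x, a)) μ)
    (k : X × M → ℝ) (hk : ∀ z, k z = p z / (pX z.1 * pM z.2))
    (c₁ c₂ : ℝ) (hc₁ : 0 < c₁) (hc₁₂ : c₁ ≤ c₂)
    (hkbd : ∀ᵐ z ∂(μ.prod ν), c₁ ≤ k z ∧ k z ≤ c₂)
    (ℒstar : ℕ → ℝ)
    (hℒstar : ∀ L : ℕ, ℒstar L = ∫ z : X × (Fin (L + 1) → M),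
      p (z.1, z.2 0) * (∏ ℓ ∈ Finset.univ.erase (0 : Fin (L + 1)), pM (z.2 ℓ)) *
        Real.log (k (z.1, z.2 0) / ((1 / ((L : ℝ) + 1)) * ∑ ℓ, k (z.1, z.2 ℓ)))
      ∂(μ.prod (Measure.pi fun _ : Fin (L + 1) => ν))) :
    Filter.Tendsto ℒstar Filter.atTop
      (nhds (∫ z, p z * Real.log (k z) ∂(μ.prod ν))) :=
  stmt7_general μ ν p hp hp0 hp1 pX hpX pM hpM hpXpos hpMpos hpXfin k hk c₁ c₂ hc₁ hkbd ℒstar hℒstar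
end
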